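/- arXiv:2411.09824 — 9 statements merged into one kernel-verified Lean document; each statement's English description precedes it below -/
import Mathlib

section
/- Every prime ideal of a commutative unital algebra A over a field κ generated by idempotents is maximal, and the quotient A/𝔭 is isomorphic to κ. -/
/-!
A quotient of an algebra generated by idempotents is again generated by idempotents. In a domain
the only idempotents are `0` and `1`, which lie in the image of `κ`, so `κ → A ⧸ 𝔭` is onto; being
injective as a map out of a field, it identifies `A ⧸ 𝔭` with `κ`, which in particular is a field.
-/

namespace Algebra

theorem adjoin_setOf_isIdempotentElem_eq_top_of_surjective {R A B : Type*} [CommSemiring R]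
    [Semiring A] [Semiring B] [Algebra R A] [Algebra R B]
    (hA : adjoin R {e : A | IsIdempotentElem e} = ⊤) (f : A →ₐ[R] B)
    (hf : Function.Surjective f) :
    adjoin R {e : B | IsIdempotentElem e} = ⊤ := by
  have hmap : adjoin R (f '' {e : A | IsIdempotentElem e}) = ⊤ := by
    rw [← AlgHom.map_adjoin, hA, map_top, AlgHom.range_eq_top]
    exact hf
  exact top_unique <| hmap.ge.trans <| adjoin_mono <| by
    rintro - ⟨e, he, rfl⟩
    exact he.map f

theorem algebraMap_surjective_of_adjoin_setOf_isIdempotentElem_eq_top {R B : Type*}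
    [CommSemiring R] [Semiring B] [IsLeftCancelMulZero B] [Algebra R B]
    (hB : adjoin R {e : B | IsIdempotentElem e} = ⊤) :
    Function.Surjective (algebraMap R B) := by
  have hbot : (⊤ : Subalgebra R B) = ⊥ := by
    refine hB ▸ le_bot_iff.mp (adjoin_le fun e he ↦ ?_)
    rcases IsIdempotentElem.iff_eq_zero_or_one.mp he with rfl | rfl
    exacts [zero_mem _, one_mem _]
  exact fun b ↦ mem_bot.mp (hbot ▸ mem_top)

theorem algebraMap_bijective_of_adjoin_setOf_isIdempotentElem_eq_top {κ B : Type*} [Field κ]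
    [Semiring B] [Nontrivial B] [IsLeftCancelMulZero B] [Algebra κ B]
    (hB : adjoin κ {e : B | IsIdempotentElem e} = ⊤) :
    Function.Bijective (algebraMap κ B) :=
  ⟨(algebraMap κ B).injective, algebraMap_surjective_of_adjoin_setOf_isIdempotentElem_eq_top hB⟩

end Algebra

/-- Every prime ideal of a commutative unital algebra over a field `κ` generated by
idempotents is maximal, and the quotient is isomorphic to `κ`. -/
theorem stmt_0 {κ A : Type} [Field κ] [CommRing A] [Algebra κ A]
    (hA : Algebra.adjoin κ {e : A | IsIdempotentElem e} = ⊤)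
    (𝔭 : Ideal A) (h𝔭 : 𝔭.IsPrime) :
    𝔭.IsMaximal ∧ Nonempty ((A ⧸ 𝔭) ≃ₐ[κ] κ) := by
  have hquot : Algebra.adjoin κ {e : A ⧸ 𝔭 | IsIdempotentElem e} = ⊤ :=
    Algebra.adjoin_setOf_isIdempotentElem_eq_top_of_surjective hA (Ideal.Quotient.mkₐ κ 𝔭)
      (Ideal.Quotient.mkₐ_surjective κ 𝔭)
  let e : κ ≃ₐ[κ] A ⧸ 𝔭 := AlgEquiv.ofBijective (Algebra.ofId κ (A ⧸ 𝔭))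
    (Algebra.algebraMap_bijective_of_adjoin_setOf_isIdempotentElem_eq_top hquot)
  exact ⟨Ideal.Quotient.maximal_of_isField 𝔭 (e.symm.toMulEquiv.isField (Field.toIsField κ)), ⟨e.symm⟩⟩
end

section
/- For a commutative unital κ-algebra A generated by idempotents, the collection of sets D(e) = {𝔭 ∈ Spec A : e ∉ 𝔭}, where e ranges over the idempotents of A, consists of exactly all compact open subsets of Spec A and forms a base for the Zariski topology of Spec A. -/
/-!
Every element `a` of `A` is von Neumann regular, `a = a² x`, so `D(a) = D(ax)` with `ax`
idempotent. Regularity of `a = ∑ cᵢ gᵢ` (`gᵢ` idempotent) follows by induction on the number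
of terms, splitting along the last idempotent `g`: `a = a g + a (1 - g)`, and on each piece `g`
acts as `1` or `0`. Hence every `D(a)` is clopen, every compact open set, being a finite union
of `D(a)`'s, is clopen, and clopen sets of `Spec A` are exactly the `D(e)` with `e` idempotent.
-/

open PrimeSpectrum

def IsVonNeumannRegular {R : Type*} [CommRing R] (a : R) : Prop :=
  ∃ x, a * a * x = a

namespace IsVonNeumannRegular

variable {R : Type*} [CommRing R]

lemma mul_add_mul_one_sub {a b g : R} (ha : IsVonNeumannRegular a)
    (hb : IsVonNeumannRegular b) (hg : IsIdempotentElem g) :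
    IsVonNeumannRegular (a * g + b * (1 - g)) := by
  obtain ⟨x, hx⟩ := ha
  obtain ⟨y, hy⟩ := hb
  refine ⟨x * g + y * (1 - g), ?_⟩
  -- `g (1 - g) = 0`, so squaring and multiplying by the witness act on each summand separately
  linear_combination g * hx + (1 - g) * hy +
    ((a - b) ^ 2 * (x * g + y * (1 - g)) + (a * a - b * b) * (x - y)) * hg.eq

lemma exists_isIdempotentElem_basicOpen_eq {a : R} (ha : IsVonNeumannRegular a) :
    ∃ e : R, IsIdempotentElem e ∧ basicOpen a = basicOpen e := by
  obtain ⟨x, hx⟩ := ha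
  refine ⟨a * x, ?_, le_antisymm ?_ (basicOpen_mul_le_left a x)⟩
  · show a * x * (a * x) = a * x
    linear_combination x * hx
  · calc basicOpen a = basicOpen (a * x * a) := by rw [mul_right_comm, hx]
      _ ≤ basicOpen (a * x) := basicOpen_mul_le_left _ _

lemma isClopen_basicOpen {a : R} (ha : IsVonNeumannRegular a) :
    IsClopen (basicOpen a : Set (PrimeSpectrum R)) := by
  obtain ⟨e, he, h⟩ := ha.exists_isIdempotentElem_basicOpen_eq
  exact isClopen_iff.mpr ⟨e, he, by rw [h]⟩

end IsVonNeumannRegular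

lemma isVonNeumannRegular_algebraMap {κ R : Type*} [Field κ] [CommRing R] [Algebra κ R] (d : κ) :
    IsVonNeumannRegular (algebraMap κ R d) := by
  by_cases hd : d = 0
  · exact ⟨0, by simp [hd]⟩
  · refine ⟨algebraMap κ R d⁻¹, ?_⟩
    rw [mul_assoc, ← map_mul, mul_inv_cancel₀ hd, map_one, mul_one]

lemma PrimeSpectrum.isClopen_of_isCompact_of_isOpen {R : Type*} [CommRing R]
    (hR : ∀ a : R, IsVonNeumannRegular a) {U : Set (PrimeSpectrum R)} (hc : IsCompact U)
    (ho : IsOpen U) : IsClopen U := by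
  obtain ⟨s, hs, rfl⟩ := (isCompact_open_iff_eq_finite_iUnion_of_isTopologicalBasis _
    isTopologicalBasis_basic_opens isCompact_basicOpen U).mp ⟨hc, ho⟩
  exact ⟨hs.isClosed_biUnion fun a _ => (hR a).isClopen_basicOpen.isClosed, ho⟩

section Idempotents

variable {κ A : Type*} [Field κ] [CommRing A] [Algebra κ A]

lemma isVonNeumannRegular_algebraMap_add_sum_smul {t : Finset A}
    (ht : ∀ g ∈ t, IsIdempotentElem g) (c : A → κ) (d : κ) :
    IsVonNeumannRegular (algebraMap κ A d + ∑ g ∈ t, c g • g) := by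
  classical
  induction t using Finset.induction_on generalizing d with
  | empty => simpa using isVonNeumannRegular_algebraMap d
  | @insert g t hgt ih =>
    have ht' : ∀ g ∈ t, IsIdempotentElem g := fun g hg => ht g (Finset.mem_insert_of_mem hg)
    have hsplit : algebraMap κ A d + ∑ g' ∈ insert g t, c g' • g'
        = (algebraMap κ A (d + c g) + ∑ g' ∈ t, c g' • g') * g
          + (algebraMap κ A d + ∑ g' ∈ t, c g' • g') * (1 - g) := by
      rw [Finset.sum_insert hgt, map_add, Algebra.smul_def]
      ring
    rw [hsplit]
    exact (ih ht' _).mul_add_mul_one_sub (ih ht' d) (ht g (Finset.mem_insert_self g t))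

lemma isVonNeumannRegular_of_mem_span_idempotents {a : A}
    (ha : a ∈ Submodule.span κ {e : A | IsIdempotentElem e}) : IsVonNeumannRegular a := by
  obtain ⟨c, hc, rfl⟩ := Submodule.mem_span_set.mp ha
  simpa [Finsupp.sum] using isVonNeumannRegular_algebraMap_add_sum_smul (fun g hg => hc hg) c 0

lemma isVonNeumannRegular_of_adjoin_idempotents_eq_top
    (hA : Algebra.adjoin κ {e : A | IsIdempotentElem e} = ⊤) (a : A) : IsVonNeumannRegular a := by
  have hclosure : (Submonoid.closure {e : A | IsIdempotentElem e} : Set A)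
      ⊆ Submodule.span κ {e : A | IsIdempotentElem e} := fun x hx =>
    Submodule.subset_span <| Submonoid.closure_induction (fun _ he => he) .one
      (fun _ _ _ _ => IsIdempotentElem.mul) hx
  refine isVonNeumannRegular_of_mem_span_idempotents <|
    (Algebra.adjoin_toSubmodule_le κ).mpr hclosure ?_
  simp [hA]

end Idempotents


/-- For a commutative unital `κ`-algebra `A` generated by idempotents, the sets `D(e)`
with `e` idempotent are exactly the compact open subsets of `Spec A` and form a basis
of the Zariski topology. -/
theorem stmt_2 {κ A : Type} [Field κ] [CommRing A] [Algebra κ A]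
    (hA : Algebra.adjoin κ {e : A | IsIdempotentElem e} = ⊤) :
    {U : Set (PrimeSpectrum A) | ∃ e : A, IsIdempotentElem e ∧
        U = (PrimeSpectrum.basicOpen e : Set (PrimeSpectrum A))}
      = {U : Set (PrimeSpectrum A) | IsCompact U ∧ IsOpen U} ∧
    TopologicalSpace.IsTopologicalBasis
      {U : Set (PrimeSpectrum A) | ∃ e : A, IsIdempotentElem e ∧
        U = (PrimeSpectrum.basicOpen e : Set (PrimeSpectrum A))} := by
  have hreg := isVonNeumannRegular_of_adjoin_idempotents_eq_top hA
  have hrange : {U : Set (PrimeSpectrum A) | ∃ e : A, IsIdempotentElem e ∧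
      U = (basicOpen e : Set (PrimeSpectrum A))} = Set.range fun a : A => (basicOpen a : Set _) := by
    ext U
    constructor
    · rintro ⟨e, -, rfl⟩
      exact ⟨e, rfl⟩
    · rintro ⟨a, rfl⟩
      obtain ⟨e, he, h⟩ := (hreg a).exists_isIdempotentElem_basicOpen_eq
      exact ⟨e, he, congrArg SetLike.coe h⟩
  refine ⟨?_, hrange ▸ isTopologicalBasis_basic_opens⟩
  ext U
  constructor
  · rintro ⟨e, -, rfl⟩
    exact ⟨isCompact_basicOpen e, (basicOpen e).isOpen⟩
  · rintro ⟨hc, ho⟩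
    exact isClopen_iff.mp (isClopen_of_isCompact_of_isOpen hreg hc ho)
end

section
/- The map sending a ∈ A to the function â : Â → κ defined by â(φ) = φ(a) is an isomorphism of κ-algebras from A onto the algebra of locally constant functions Â → κ. -/
/-!
Every element of `A` is a step element `∑ cᵢ • eᵢ` over a finite complete family of orthogonal
idempotents: two such families have a common refinement by pairwise products, so step elements
form a subalgebra containing the generators. A character sends exactly one `eᵢ` to `1`, hence
`φ ↦ φ a` takes finitely many values and `Â`, a closed subset of a product of finite sets, is
compact. If `φ a = 0` for all `φ`, every `cᵢ • eᵢ` vanishes: a nonzero idempotent `e` survives in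
`A ⧸ m` for a maximal ideal `m ∋ 1 - e`, and `A ⧸ m = κ` because its only idempotents are `0`
and `1`. Characters are separated by idempotents, and the sets `{φ | φ e = 1}` are clopen and
closed under finite unions and intersections, so by compactness they exhaust the clopen sets;
a locally constant `f` is then `∑ c • 1_{f = c}`, the transform of `∑ c • e_c`.
-/

open Finset

theorem OrthogonalIdempotents.sum_smul_mul_sum_smul {R A ι : Type*} [CommSemiring R]
    [Semiring A] [Algebra R A] [Fintype ι] {e : ι → A} (he : OrthogonalIdempotents e)
    (c d : ι → R) : (∑ i, c i • e i) * (∑ i, d i • e i) = ∑ i, (c i * d i) • e i := by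
  classical
  simp only [sum_mul_sum, smul_mul_smul, he.mul_eq, smul_ite, smul_zero, sum_ite_eq,
    mem_univ, if_true]

theorem CompleteOrthogonalIdempotents.mul {A ι ι' : Type*} [CommSemiring A] [Fintype ι]
    [Fintype ι'] {e : ι → A} {f : ι' → A} (he : CompleteOrthogonalIdempotents e)
    (hf : CompleteOrthogonalIdempotents f) :
    CompleteOrthogonalIdempotents fun p : ι × ι' => e p.1 * f p.2 where
  idem p := (he.idem p.1).mul (hf.idem p.2)
  ortho p q hpq := by
    dsimp only
    rw [mul_mul_mul_comm]
    obtain h | h : p.1 ≠ q.1 ∨ p.2 ≠ q.2 := by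
      by_contra! h; exact hpq (Prod.ext h.1 h.2)
    · rw [he.ortho h, zero_mul]
    · rw [hf.ortho h, mul_zero]
  complete := by rw [Fintype.sum_prod_type, ← sum_mul_sum, he.complete, hf.complete, one_mul]

/-- Named after step functions: the value `c i` on the piece `e i` of a partition of unity. -/
def IsStepElem (R : Type*) {A : Type*} [CommSemiring R] [Semiring A] [Algebra R A] (a : A) :
    Prop :=
  ∃ (ι : Type) (_ : Fintype ι) (e : ι → A) (c : ι → R),
    CompleteOrthogonalIdempotents e ∧ a = ∑ i, c i • e i

section StepElements

variable {R A : Type*} [CommSemiring R] [CommSemiring A] [Algebra R A] {a b : A}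

theorem isStepElem_algebraMap (r : R) : IsStepElem R (algebraMap R A r) :=
  ⟨Unit, inferInstance, fun _ => 1, fun _ => r, CompleteOrthogonalIdempotents.unique_iff.2 rfl,
    by simp [Algebra.algebraMap_eq_smul_one]⟩

theorem IsStepElem.exists_common_refinement (ha : IsStepElem R a) (hb : IsStepElem R b) :
    ∃ (ι : Type) (_ : Fintype ι) (e : ι → A) (c d : ι → R), CompleteOrthogonalIdempotents e ∧
      a = ∑ i, c i • e i ∧ b = ∑ i, d i • e i := by
  obtain ⟨ι, _, e, c, he, rfl⟩ := ha
  obtain ⟨ι', _, f, d, hf, rfl⟩ := hb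
  refine ⟨ι × ι', inferInstance, _, fun p => c p.1, fun p => d p.2, he.mul hf, ?_, ?_⟩
  · simp only [Fintype.sum_prod_type, ← smul_sum, ← mul_sum, hf.complete, mul_one]
  · simp only [Fintype.sum_prod_type]
    rw [sum_comm]
    simp only [← smul_sum, ← sum_mul, he.complete, one_mul]

theorem IsStepElem.add (ha : IsStepElem R a) (hb : IsStepElem R b) : IsStepElem R (a + b) := by
  obtain ⟨ι, _, e, c, d, he, rfl, rfl⟩ := ha.exists_common_refinement hb
  exact ⟨ι, _, e, c + d, he, by simp only [Pi.add_apply, add_smul, sum_add_distrib]⟩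

theorem IsStepElem.mul (ha : IsStepElem R a) (hb : IsStepElem R b) : IsStepElem R (a * b) := by
  obtain ⟨ι, _, e, c, d, he, rfl, rfl⟩ := ha.exists_common_refinement hb
  exact ⟨ι, _, e, c * d, he, he.sum_smul_mul_sum_smul c d⟩

end StepElements

section StepElementsRing

variable {R A : Type*} [CommSemiring R] [CommRing A] [Algebra R A]

theorem IsIdempotentElem.isStepElem {e : A} (he : IsIdempotentElem e) : IsStepElem R e :=
  ⟨Fin 2, inferInstance, ![e, 1 - e], ![1, 0], .of_isIdempotentElem he, by simp⟩

theorem IsStepElem.of_adjoin_eq_top (hA : Algebra.adjoin R {e : A | IsIdempotentElem e} = ⊤)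
    (a : A) : IsStepElem R a := by
  induction (hA ▸ Algebra.mem_top : a ∈ Algebra.adjoin R _) using Algebra.adjoin_induction with
  | mem x hx => exact hx.isStepElem
  | algebraMap r => exact isStepElem_algebraMap r
  | add x y _ _ hx hy => exact hx.add hy
  | mul x y _ _ hx hy => exact hx.mul hy

end StepElementsRing

theorem CompleteOrthogonalIdempotents.exists_eq_one_of_isDomain {K ι : Type*} [Semiring K]
    [IsDomain K] [Fintype ι] {e : ι → K} (he : CompleteOrthogonalIdempotents e) :
    ∃ i, e i = 1 :=
  let ⟨i, _, hi⟩ := exists_ne_zero_of_sum_ne_zero (he.complete ▸ one_ne_zero)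
  ⟨i, (IsIdempotentElem.iff_eq_zero_or_one.1 (he.idem i)).resolve_left hi⟩

theorem OrthogonalIdempotents.apply_sum_smul_of_apply_eq_one {R A B ι : Type*}
    [CommSemiring R] [Semiring A] [Algebra R A] [Semiring B] [Algebra R B] [Fintype ι]
    {e : ι → A} (he : OrthogonalIdempotents e) (c : ι → R) (φ : A →ₐ[R] B) {i : ι}
    (hi : φ (e i) = 1) : φ (∑ j, c j • e j) = algebraMap R B (c i) := by
  have hj (j : ι) (hji : j ≠ i) : φ (e j) = 0 := by
    rw [← mul_one (φ (e j)), ← hi, ← map_mul, he.ortho hji, map_zero]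
  rw [map_sum, sum_eq_single i (fun j _ hji => by rw [map_smul, hj j hji, smul_zero]) (by simp),
    map_smul, hi, Algebra.smul_def, mul_one]

theorem IsStepElem.finite_range_apply {R A K : Type*} [CommSemiring R] [Semiring A] [Algebra R A]
    [CommRing K] [IsDomain K] [Algebra R K] {a : A} (ha : IsStepElem R a) :
    (Set.range fun φ : A →ₐ[R] K => φ a).Finite := by
  obtain ⟨ι, _, e, c, he, rfl⟩ := ha
  refine (Set.finite_range (algebraMap R K ∘ c)).subset ?_
  rintro _ ⟨φ, rfl⟩
  obtain ⟨i, hi⟩ := (he.map (φ : A →+* K)).exists_eq_one_of_isDomain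
  exact ⟨i, (he.apply_sum_smul_of_apply_eq_one c φ hi).symm⟩

theorem Algebra.adjoin_isIdempotentElem_eq_top_of_surjective {R A B : Type*} [CommSemiring R]
    [Semiring A] [Semiring B] [Algebra R A] [Algebra R B]
    (hA : adjoin R {e : A | IsIdempotentElem e} = ⊤) {f : A →ₐ[R] B}
    (hf : Function.Surjective f) : adjoin R {e : B | IsIdempotentElem e} = ⊤ := by
  refine Algebra.eq_top_iff.2 fun b => ?_
  obtain ⟨a, rfl⟩ := hf b
  have : f a ∈ (adjoin R {e : A | IsIdempotentElem e}).map f := ⟨a, hA ▸ mem_top, rfl⟩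
  rw [AlgHom.map_adjoin] at this
  refine adjoin_mono ?_ this
  rintro _ ⟨e, he, rfl⟩
  exact he.map f

theorem Algebra.algebraMap_surjective_of_adjoin_isIdempotentElem_eq_top {R K : Type*}
    [CommSemiring R] [Semiring K] [IsDomain K] [Algebra R K]
    (hK : adjoin R {e : K | IsIdempotentElem e} = ⊤) : Function.Surjective (algebraMap R K) := by
  have hbot : adjoin R {e : K | IsIdempotentElem e} ≤ ⊥ := adjoin_le fun e he => by
    rcases IsIdempotentElem.iff_eq_zero_or_one.1 he with rfl | rfl
    exacts [zero_mem ⊥, one_mem ⊥]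
  exact fun x => mem_bot.1 (hbot (hK ▸ mem_top))

theorem exists_algHom_apply_eq_one_of_isIdempotentElem {κ A : Type*} [Field κ] [CommRing A]
    [Algebra κ A] (hA : Algebra.adjoin κ {e : A | IsIdempotentElem e} = ⊤) {e : A}
    (he : IsIdempotentElem e) (he0 : e ≠ 0) : ∃ φ : A →ₐ[κ] κ, φ e = 1 := by
  have hunit : ¬IsUnit (1 - e) := fun h =>
    he0 (by simpa using (IsIdempotentElem.iff_eq_one_of_isUnit h).1 he.one_sub)
  obtain ⟨m, hm, hle⟩ :=
    Ideal.exists_le_maximal (Ideal.span {1 - e}) (by rwa [Ne, Ideal.span_singleton_eq_top])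
  have hsurj := Algebra.algebraMap_surjective_of_adjoin_isIdempotentElem_eq_top
    (Algebra.adjoin_isIdempotentElem_eq_top_of_surjective hA (Ideal.Quotient.mkₐ_surjective κ m))
  let ε : κ ≃ₐ[κ] A ⧸ m :=
    AlgEquiv.ofBijective (Algebra.ofId κ _) ⟨(algebraMap κ _).injective, hsurj⟩
  refine ⟨ε.symm.toAlgHom.comp (Ideal.Quotient.mkₐ κ m), ?_⟩
  have : Ideal.Quotient.mk m e = 1 := by
    rw [eq_comm, ← sub_eq_zero, ← map_one (Ideal.Quotient.mk m), ← map_sub,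
      Ideal.Quotient.eq_zero_iff_mem]
    exact hle (Ideal.mem_span_singleton_self _)
  simp [this]

theorem eq_zero_of_forall_algHom_apply_eq_zero {κ A : Type*} [Field κ] [CommRing A]
    [Algebra κ A] (hA : Algebra.adjoin κ {e : A | IsIdempotentElem e} = ⊤) {a : A}
    (h : ∀ φ : A →ₐ[κ] κ, φ a = 0) : a = 0 := by
  obtain ⟨ι, _, e, c, he, rfl⟩ := IsStepElem.of_adjoin_eq_top hA a
  refine sum_eq_zero fun i _ => ?_
  by_contra hi
  obtain ⟨φ, hφ⟩ := exists_algHom_apply_eq_one_of_isIdempotentElem hA (he.idem i)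
    (right_ne_zero_of_smul hi)
  have hc : c i = 0 := by simpa [h φ] using (he.apply_sum_smul_of_apply_eq_one c φ hφ).symm
  exact hi (by rw [hc, zero_smul])

section SeparatingClopens

variable {X : Type*} [TopologicalSpace X] [CompactSpace X] {S : Set (Set X)}

open Set

theorem IsOpen.exists_mem_subset_of_separating (hS : ∀ V ∈ S, IsClosed V) (hinf : InfClosed S)
    (huniv : univ ∈ S) (hsep : ∀ x y, x ≠ y → ∃ V ∈ S, x ∈ V ∧ y ∉ V) {U : Set X}
    (hU : IsOpen U) {x : X} (hx : x ∈ U) : ∃ V ∈ S, x ∈ V ∧ V ⊆ U := by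
  choose! V hVS hxV hyV using fun y (hy : y ∈ Uᶜ) => hsep x y (ne_of_mem_of_not_mem hx hy)
  obtain ⟨t, htU, htfin, hcover⟩ := hU.isClosed_compl.isCompact.elim_finite_subcover_image
    (fun y hy => (hS _ (hVS y hy)).isOpen_compl) fun y hy => mem_biUnion hy (hyV y hy)
  refine ⟨⋂ y ∈ t, V y, hinf.biInf_mem htfin huniv fun y hy => hVS y (htU hy),
    mem_iInter₂.2 fun y hy => hxV y (htU hy), fun z hz => ?_⟩
  by_contra hzU
  obtain ⟨y, hy, hzy⟩ := mem_iUnion₂.1 (hcover hzU)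
  exact hzy (mem_iInter₂.1 hz y hy)

theorem IsClopen.mem_of_separating (hS : ∀ V ∈ S, IsClopen V) (hsup : SupClosed S)
    (hinf : InfClosed S) (hempty : ∅ ∈ S) (huniv : univ ∈ S)
    (hsep : ∀ x y, x ≠ y → ∃ V ∈ S, x ∈ V ∧ y ∉ V) {U : Set X} (hU : IsClopen U) : U ∈ S := by
  choose! W hWS hxW hWU using fun x (hx : x ∈ U) =>
    hU.isOpen.exists_mem_subset_of_separating (fun V hV => (hS V hV).isClosed) hinf huniv hsep hx
  obtain ⟨t, htU, htfin, hcover⟩ := hU.isClosed.isCompact.elim_finite_subcover_image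
    (fun x hx => (hS _ (hWS x hx)).isOpen) fun x hx => mem_biUnion hx (hxW x hx)
  have hU_eq : U = ⋃ x ∈ t, W x :=
    hcover.antisymm (iUnion₂_subset fun x hx => hWU x (htU hx))
  rw [hU_eq]
  exact hsup.biSup_mem htfin hempty fun x hx => hWS x (htU hx)

end SeparatingClopens

namespace AlgHom

variable (R A K : Type*) [CommSemiring R] [Semiring A] [Algebra R A] [Semiring K] [Algebra R K]
  [TopologicalSpace K]

abbrev pointwiseConvergenceTopology : TopologicalSpace (A →ₐ[R] K) :=
  TopologicalSpace.induced (fun φ : A →ₐ[R] K => (φ : A → K)) Pi.topologicalSpace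

theorem isClosed_range_coe [T2Space K] [ContinuousAdd K] [ContinuousMul K]
    [ContinuousConstSMul R K] : IsClosed (Set.range ((↑) : (A →ₐ[R] K) → A → K)) := by
  have hrange : Set.range ((↑) : (A →ₐ[R] K) → A → K) =
      Set.range ((↑) : (A →ₗ[R] K) → A → K) ∩ Set.range ((↑) : (A →* K) → A → K) := by
    ext f
    constructor
    · rintro ⟨φ, rfl⟩
      exact ⟨⟨φ.toLinearMap, rfl⟩, ⟨φ.toMonoidHom, rfl⟩⟩
    · rintro ⟨⟨l, rfl⟩, ⟨m, hm⟩⟩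
      refine ⟨.ofLinearMap l ?_ ?_, rfl⟩
      · rw [← hm, map_one]
      · intro x y; rw [← hm, map_mul]
  rw [hrange]
  exact (LinearMap.isClosed_range_coe A K (RingHom.id R)).inter (MonoidHom.isClosed_range_coe A K)

attribute [local instance] pointwiseConvergenceTopology

variable {R A K}

theorem continuous_apply (a : A) : Continuous fun φ : A →ₐ[R] K => φ a :=
  (_root_.continuous_apply a).comp continuous_induced_dom

theorem compactSpace_of_finite_range_apply [T2Space K] [ContinuousAdd K] [ContinuousMul K]
    [ContinuousConstSMul R K] (h : ∀ a : A, (Set.range fun φ : A →ₐ[R] K => φ a).Finite) :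
    CompactSpace (A →ₐ[R] K) := by
  have hcompact : IsCompact (Set.range ((↑) : (A →ₐ[R] K) → A → K)) := by
    refine (isCompact_univ_pi fun a => (h a).isCompact).of_isClosed_subset
      (isClosed_range_coe R A K) ?_
    rintro _ ⟨φ, rfl⟩ a -
    exact ⟨φ, rfl⟩
  rw [← Set.image_univ, ← (Topology.IsInducing.induced _).isCompact_iff] at hcompact
  exact ⟨hcompact⟩

end AlgHom

section Characters

open AlgHom

attribute [local instance] pointwiseConvergenceTopology

variable {R A K : Type*} [CommSemiring R] [CommRing A] [Algebra R A] [CommRing K] [IsDomain K]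
  [Algebra R K]

theorem AlgHom.apply_eq_zero_or_one {e : A} (he : IsIdempotentElem e) (φ : A →ₐ[R] K) :
    φ e = 0 ∨ φ e = 1 :=
  IsIdempotentElem.iff_eq_zero_or_one.1 (he.map φ)

theorem setOf_apply_mul_eq_one {e f : A} (he : IsIdempotentElem e) (hf : IsIdempotentElem f) :
    {φ : A →ₐ[R] K | φ (e * f) = 1} = {φ | φ e = 1} ∩ {φ | φ f = 1} := by
  ext φ
  rcases φ.apply_eq_zero_or_one he with h | h <;>
    rcases φ.apply_eq_zero_or_one hf with h' | h' <;> simp [h, h']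

theorem setOf_apply_add_sub_mul_eq_one {e f : A} (he : IsIdempotentElem e)
    (hf : IsIdempotentElem f) :
    {φ : A →ₐ[R] K | φ (e + f - e * f) = 1} = {φ | φ e = 1} ∪ {φ | φ f = 1} := by
  ext φ
  rcases φ.apply_eq_zero_or_one he with h | h <;>
    rcases φ.apply_eq_zero_or_one hf with h' | h' <;> simp [h, h']

theorem exists_isIdempotentElem_apply_eq_one_ne_one
    (hA : Algebra.adjoin R {e : A | IsIdempotentElem e} = ⊤) {φ ψ : A →ₐ[R] K} (hφψ : φ ≠ ψ) :
    ∃ e, IsIdempotentElem e ∧ φ e = 1 ∧ ψ e ≠ 1 := by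
  obtain ⟨e, he, hne⟩ : ∃ e, IsIdempotentElem e ∧ φ e ≠ ψ e := by
    by_contra! h
    exact hφψ (AlgHom.ext_of_adjoin_eq_top hA h)
  rcases φ.apply_eq_zero_or_one he with h | h
  · refine ⟨1 - e, he.one_sub, by simp [h], ?_⟩
    rcases ψ.apply_eq_zero_or_one he with h' | h' <;> simp_all
  · exact ⟨e, he, h, h ▸ hne.symm⟩

variable [TopologicalSpace K] [DiscreteTopology K]

theorem AlgHom.compactSpace_of_adjoin_isIdempotentElem_eq_top
    (hA : Algebra.adjoin R {e : A | IsIdempotentElem e} = ⊤) : CompactSpace (A →ₐ[R] K) :=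
  compactSpace_of_finite_range_apply fun a => (IsStepElem.of_adjoin_eq_top hA a).finite_range_apply

theorem exists_isIdempotentElem_setOf_apply_eq_one_eq
    (hA : Algebra.adjoin R {e : A | IsIdempotentElem e} = ⊤) {U : Set (A →ₐ[R] K)}
    (hU : IsClopen U) : ∃ e, IsIdempotentElem e ∧ {φ : A →ₐ[R] K | φ e = 1} = U := by
  have := compactSpace_of_adjoin_isIdempotentElem_eq_top (K := K) hA
  refine IsClopen.mem_of_separating (S := {U | ∃ e, IsIdempotentElem e ∧ {φ | φ e = 1} = U})
    ?_ ?_ ?_ ⟨0, .zero, by simp⟩ ⟨1, .one, by simp⟩ ?_ hU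
  · rintro _ ⟨e, -, rfl⟩
    exact (isClopen_discrete {1}).preimage (continuous_apply e)
  · rintro _ ⟨e, he, rfl⟩ _ ⟨f, hf, rfl⟩
    exact ⟨_, he.add_sub_mul hf, setOf_apply_add_sub_mul_eq_one he hf⟩
  · rintro _ ⟨e, he, rfl⟩ _ ⟨f, hf, rfl⟩
    exact ⟨_, he.mul hf, setOf_apply_mul_eq_one he hf⟩
  · intro φ ψ hφψ
    obtain ⟨e, he, hφ, hψ⟩ := exists_isIdempotentElem_apply_eq_one_ne_one hA hφψ
    exact ⟨_, ⟨e, he, rfl⟩, hφ, hψ⟩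

end Characters

section GelfandTransform

attribute [local instance] AlgHom.pointwiseConvergenceTopology

variable (R A K : Type*) [CommSemiring R] [Semiring A] [Algebra R A] [Semiring K] [Algebra R K]
  [TopologicalSpace K] [DiscreteTopology K] in
def locallyConstantGelfandTransform : A →ₐ[R] LocallyConstant (A →ₐ[R] K) K where
  toFun a := ⟨fun φ => φ a, (IsLocallyConstant.iff_continuous _).2 (AlgHom.continuous_apply a)⟩
  map_one' := by ext φ; exact map_one φ
  map_mul' x y := by ext φ; exact map_mul φ x y
  map_zero' := by ext φ; exact map_zero φ
  map_add' x y := by ext φ; exact map_add φ x y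
  commutes' r := by ext φ; exact φ.commutes r

theorem locallyConstantGelfandTransform_injective {κ A : Type*} [Field κ] [CommRing A]
    [Algebra κ A] [TopologicalSpace κ] [DiscreteTopology κ]
    (hA : Algebra.adjoin κ {e : A | IsIdempotentElem e} = ⊤) :
    Function.Injective (locallyConstantGelfandTransform κ A κ) :=
  (injective_iff_map_eq_zero _).2 fun _ ha =>
    eq_zero_of_forall_algHom_apply_eq_zero hA fun φ => LocallyConstant.congr_fun ha φ

theorem locallyConstantGelfandTransform_surjective {K A : Type*} [CommRing K] [IsDomain K]
    [CommRing A] [Algebra K A] [TopologicalSpace K] [DiscreteTopology K]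
    (hA : Algebra.adjoin K {e : A | IsIdempotentElem e} = ⊤) :
    Function.Surjective (locallyConstantGelfandTransform K A K) := by
  classical
  have := AlgHom.compactSpace_of_adjoin_isIdempotentElem_eq_top (K := K) hA
  intro f
  choose e he hsupp using fun c : K =>
    exists_isIdempotentElem_setOf_apply_eq_one_eq hA (f.isLocallyConstant.isClopen_fiber c)
  have hval (c : K) (φ : A →ₐ[K] K) : φ (e c) = if f φ = c then 1 else 0 := by
    have hmem : φ (e c) = 1 ↔ f φ = c := Set.ext_iff.1 (hsupp c) φ
    split_ifs with hc
    · exact hmem.2 hc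
    · exact (φ.apply_eq_zero_or_one (he c)).resolve_right (mt hmem.1 hc)
  refine ⟨∑ c ∈ f.range_finite.toFinset, c • e c, ?_⟩
  ext φ
  change φ (∑ c ∈ _, c • e c) = f φ
  simp [hval]

end GelfandTransform

/-- The Gelfand-type theorem: for a commutative unital `κ`-algebra `A` generated by
idempotents, the map `a ↦ â`, `â(φ) = φ(a)`, is a `κ`-algebra isomorphism of `A` onto
the algebra of locally constant functions `Â → κ`, where `Â` is the space of
(automatically nonzero) `κ`-algebra homomorphisms `A → κ` with the topology induced
from the product topology on `κ^A` (`κ` discrete). -/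
theorem stmt_3 {κ A : Type} [Field κ] [CommRing A] [Algebra κ A]
    (hA : Algebra.adjoin κ {e : A | IsIdempotentElem e} = ⊤) :
    letI : TopologicalSpace κ := ⊥
    letI : TopologicalSpace (A →ₐ[κ] κ) :=
      TopologicalSpace.induced (fun φ : A →ₐ[κ] κ => (φ : A → κ)) Pi.topologicalSpace
    ∃ F : A ≃ₐ[κ] LocallyConstant (A →ₐ[κ] κ) κ,
      ∀ (a : A) (φ : A →ₐ[κ] κ), F a φ = φ a := by
  let _ : TopologicalSpace κ := ⊥
  have : DiscreteTopology κ := ⟨rfl⟩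
  exact ⟨.ofBijective (locallyConstantGelfandTransform κ A κ)
    ⟨locallyConstantGelfandTransform_injective hA, locallyConstantGelfandTransform_surjective hA⟩,
    fun _ _ => rfl⟩
end

section
/- The set 𝒮^σ(G) := { k(U,g) : k ∈ κ∖{0}, U ∈ Ω_σ finite, g ∈ U } ∪ {0}, with product k(U,g) ⋆ r(V,h) := σ(g,h) χ(U ∪ gV) kr (U ∪ gV, gh), is a κ-cancellative inverse monoid; its unit is ({1},1), the inverse of k(U,g) is σ(g,g⁻¹)⁻¹ k⁻¹ (g⁻¹U, g⁻¹), and its nonzero idempotents are exactly the elements (U,1). -/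
def IsPartialProjRep {κ G : Type} [Field κ] [Group G] (σ : G → G → κ)
    (R : Type) [Ring R] [Algebra κ R] (Γ : G → R) : Prop :=
  Γ 1 = 1 ∧
  (∀ g h : G, σ g h = 0 → Γ g⁻¹ * Γ (g * h) = 0 ∧ Γ (g * h) * Γ h⁻¹ = 0) ∧
  (∀ g h : G, Γ g * Γ h = 0 → σ g h = 0) ∧
  (∀ g h : G, Γ g⁻¹ * Γ g * Γ h = σ g h • (Γ g⁻¹ * Γ (g * h))) ∧
  (∀ g h : G, Γ g * Γ h * Γ h⁻¹ = σ g h • (Γ (g * h) * Γ h⁻¹))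

/-- `σ` is a factor set of some partial projective representation of `G`. -/
def IsFactorSet {κ G : Type} [Field κ] [Group G] (σ : G → G → κ) : Prop :=
  ∃ (R : Type) (_ : Ring R) (_ : Algebra κ R) (Γ : G → R), IsPartialProjRep σ R Γ
/-- σ-prohibitions of type I: sets `{h, hg, hgs}` with `σ(g,s) = 0`. -/
def ProhibitionI {κ G : Type} [Field κ] [Group G] (σ : G → G → κ) : Set (Set G) :=
  {V | ∃ h g s : G, σ g s = 0 ∧ V = {h, h * g, h * g * s}}

/-- σ-prohibitions of type II: sets `{h, hg, hgs, hgst}` with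
`σ(g,st)σ(s,t) ≠ σ(g,s)σ(gs,t)`. -/
def ProhibitionII {κ G : Type} [Field κ] [Group G] (σ : G → G → κ) : Set (Set G) :=
  {V | ∃ h g s t : G,
    σ g (s * t) * σ s t ≠ σ g s * σ (g * s) t ∧ V = {h, h * g, h * g * s, h * g * s * t}}

/-- `Ω_σ`: subsets of `G` containing `1` and containing no σ-prohibition. -/
def Omega {κ G : Type} [Field κ] [Group G] (σ : G → G → κ) : Set (Set G) :=
  {ξ | (1 : G) ∈ ξ ∧ ∀ V ∈ ProhibitionI σ ∪ ProhibitionII σ, ¬ V ⊆ ξ}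

open scoped Classical

/-- Nonzero elements `k(U,g)` of the `κ`-monoid `𝒮^σ(G)`:
`k ≠ 0`, `U ∈ Ω_σ` finite, `g ∈ U`. The zero element is adjoined via `Option`. -/
def SElt {κ G : Type} [Field κ] [Group G] (σ : G → G → κ) : Type :=
  {x : κ × Set G × G // x.1 ≠ 0 ∧ x.2.1 ∈ Omega σ ∧ x.2.1.Finite ∧ x.2.2 ∈ x.2.1}

/-- Build the element `k(U,g)` of `𝒮^σ(G)`, or `0` (= `none`) if the data is not
admissible (in particular if `k = 0` or `U ∉ Ω_σ`, encoding the factors `χ` and `σ`). -/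
noncomputable def SMk {κ G : Type} [Field κ] [Group G] (σ : G → G → κ)
    (k : κ) (U : Set G) (g : G) : Option (SElt σ) :=
  if h : k ≠ 0 ∧ U ∈ Omega σ ∧ U.Finite ∧ g ∈ U then some ⟨(k, U, g), h⟩ else none

/-- The product `k(U,g) ⋆ r(V,h) = σ(g,h) χ(U ∪ gV) kr (U ∪ gV, gh)` on `𝒮^σ(G)`. -/
noncomputable def SMul' {κ G : Type} [Field κ] [Group G] (σ : G → G → κ)
    (x y : Option (SElt σ)) : Option (SElt σ) :=
  x.bind fun a => y.bind fun b =>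
    SMk σ (σ a.1.2.2 b.1.2.2 * (a.1.1 * b.1.1))
      (a.1.2.1 ∪ (fun t => a.1.2.2 * t) '' b.1.2.1) (a.1.2.2 * b.1.2.2)

/-- The action of `κ` on `𝒮^σ(G)`. -/
noncomputable def SSmul {κ G : Type} [Field κ] [Group G] (σ : G → G → κ)
    (r : κ) (x : Option (SElt σ)) : Option (SElt σ) :=
  x.bind fun a => SMk σ (r * a.1.1) a.1.2.1 a.1.2.2

/-!
Every element of `𝒮^σ(G)`, zero included, can be written as `SMk σ k U g` with `1, g ∈ U`, and
for such representatives the product formula holds on the nose even when a factor is zero: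
`Ω_σ` is closed under passing to translates of subsets containing `1`, so if `U ∪ gV ∈ Ω_σ` then
both `U` and `V` are. Associativity then reduces to the cocycle identity
`σ(g,hf)σ(h,f) = σ(g,h)σ(gh,f)`, which holds on `U ∪ gV ∪ ghW ∈ Ω_σ` because this set contains
no prohibition `{1, g, gh, ghf}`. The unit and inverse laws reduce to the normalisations
`σ(1,g) = σ(g,1) = 1` and `σ(g,g⁻¹) = σ(g⁻¹,g)`, which a partial projective representation `Γ`
forces as soon as `Γ g ≠ 0`, i.e. as soon as some `σ(g,s) ≠ 0`. Finally `(U ∪ gU, g²) = (U, g)`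
forces `g = 1`, and elements `(U, 1)` commute because union does.
-/

section FactorSet

variable {κ G : Type} [Field κ] [Group G] {σ : G → G → κ}

namespace IsPartialProjRep

variable {R : Type} [Ring R] [Algebra κ R] {Γ : G → R}

theorem ne_zero_of_sigma_ne_zero (hΓ : IsPartialProjRep σ R Γ) {g s : G} (h : σ g s ≠ 0) :
    Γ g ≠ 0 :=
  fun hg => h (hΓ.2.2.1 g s (by rw [hg, zero_mul]))

theorem sigma_one_left (hΓ : IsPartialProjRep σ R Γ) {g : G} (hg : Γ g ≠ 0) : σ 1 g = 1 := by
  have h : σ 1 g • Γ g = (1 : κ) • Γ g := by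
    simpa [hΓ.1] using (hΓ.2.2.2.1 1 g).symm
  exact smul_left_injective κ hg h

theorem sigma_one_right (hΓ : IsPartialProjRep σ R Γ) {g : G} (hg : Γ g ≠ 0) : σ g 1 = 1 := by
  have h : σ g 1 • Γ g = (1 : κ) • Γ g := by
    simpa [hΓ.1] using (hΓ.2.2.2.2 g 1).symm
  exact smul_left_injective κ hg h

theorem sigma_mul_inv_comm (hΓ : IsPartialProjRep σ R Γ) {g : G} (hg : Γ g⁻¹ ≠ 0) :
    σ g g⁻¹ = σ g⁻¹ g := by
  have h₁ := hΓ.2.2.2.1 g g⁻¹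
  have h₂ := hΓ.2.2.2.2 g⁻¹ g
  rw [mul_inv_cancel, hΓ.1, mul_one] at h₁
  rw [inv_mul_cancel, hΓ.1, one_mul] at h₂
  exact smul_left_injective κ hg (h₁.symm.trans h₂)

end IsPartialProjRep

namespace IsFactorSet

theorem sigma_one_left (hσ : IsFactorSet σ) {g s : G} (h : σ g s ≠ 0) : σ 1 g = 1 := by
  obtain ⟨R, _, _, Γ, hΓ⟩ := hσ
  exact hΓ.sigma_one_left (hΓ.ne_zero_of_sigma_ne_zero h)

theorem sigma_one_right (hσ : IsFactorSet σ) {g s : G} (h : σ g s ≠ 0) : σ g 1 = 1 := by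
  obtain ⟨R, _, _, Γ, hΓ⟩ := hσ
  exact hΓ.sigma_one_right (hΓ.ne_zero_of_sigma_ne_zero h)

theorem sigma_mul_inv_comm (hσ : IsFactorSet σ) {g s : G} (h : σ g⁻¹ s ≠ 0) :
    σ g g⁻¹ = σ g⁻¹ g := by
  obtain ⟨R, _, _, Γ, hΓ⟩ := hσ
  exact hΓ.sigma_mul_inv_comm (hΓ.ne_zero_of_sigma_ne_zero h)

end IsFactorSet

end FactorSet

section Omega

variable {κ G : Type} [Field κ] [Group G] {σ : G → G → κ}

theorem image_mul_left_mem_prohibition (g : G) {V : Set G}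
    (hV : V ∈ ProhibitionI σ ∪ ProhibitionII σ) :
    (fun t => g * t) '' V ∈ ProhibitionI σ ∪ ProhibitionII σ := by
  rcases hV with ⟨h, g', s, hσ, rfl⟩ | ⟨h, g', s, t, hσ, rfl⟩
  · exact Or.inl ⟨g * h, g', s, hσ, by simp [Set.image_insert_eq, mul_assoc]⟩
  · exact Or.inr ⟨g * h, g', s, t, hσ, by simp [Set.image_insert_eq, mul_assoc]⟩

theorem mem_omega_of_mapsTo {X Y : Set G} {g : G} (hX : X ∈ Omega σ) (hY : (1 : G) ∈ Y)
    (hmaps : Set.MapsTo (fun t => g * t) Y X) : Y ∈ Omega σ :=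
  ⟨hY, fun _ hV hVY =>
    hX.2 _ (image_mul_left_mem_prohibition g hV) ((hmaps.mono_left hVY).image_subset)⟩

theorem mem_omega_of_subset {X Y : Set G} (hX : X ∈ Omega σ) (hY : (1 : G) ∈ Y)
    (hsub : Y ⊆ X) : Y ∈ Omega σ :=
  mem_omega_of_mapsTo (g := 1) hX hY fun t ht => by simpa using hsub ht

theorem sigma_ne_zero_of_mem_omega {F : Set G} (hF : F ∈ Omega σ) {h g s : G}
    (h₁ : h ∈ F) (h₂ : h * g ∈ F) (h₃ : h * g * s ∈ F) : σ g s ≠ 0 := fun hσ =>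
  hF.2 _ (Or.inl ⟨h, g, s, hσ, rfl⟩) (by simp [Set.insert_subset_iff, h₁, h₂, h₃])

theorem sigma_cocycle_of_mem_omega {F : Set G} (hF : F ∈ Omega σ) {g h f : G}
    (h₁ : g ∈ F) (h₂ : g * h ∈ F) (h₃ : g * h * f ∈ F) :
    σ g (h * f) * σ h f = σ g h * σ (g * h) f := by
  by_contra hσ
  exact hF.2 _ (Or.inr ⟨1, g, h, f, hσ, rfl⟩) (by simp [Set.insert_subset_iff, hF.1, h₁, h₂, h₃])

variable {U : Set G} {g : G}

theorem sigma_one_left_of_mem_omega (hσ : IsFactorSet σ) (hU : U ∈ Omega σ) (hg : g ∈ U) :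
    σ 1 g = 1 :=
  hσ.sigma_one_left (s := 1) (sigma_ne_zero_of_mem_omega hU (h := 1) (by simpa using hU.1)
    (by simpa using hg) (by simpa using hg))

theorem sigma_one_right_of_mem_omega (hσ : IsFactorSet σ) (hU : U ∈ Omega σ) (hg : g ∈ U) :
    σ g 1 = 1 :=
  hσ.sigma_one_right (s := 1) (sigma_ne_zero_of_mem_omega hU (h := 1) (by simpa using hU.1)
    (by simpa using hg) (by simpa using hg))

theorem sigma_mul_inv_ne_zero_of_mem_omega (hU : U ∈ Omega σ) (hg : g ∈ U) : σ g g⁻¹ ≠ 0 :=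
  sigma_ne_zero_of_mem_omega hU (h := 1) hU.1 (by simpa using hg) (by simpa using hU.1)

theorem sigma_mul_inv_comm_of_mem_omega (hσ : IsFactorSet σ) (hU : U ∈ Omega σ) (hg : g ∈ U) :
    σ g g⁻¹ = σ g⁻¹ g :=
  hσ.sigma_mul_inv_comm (s := g)
    (sigma_ne_zero_of_mem_omega hU hg (by simpa using hU.1) (by simpa using hg))

end Omega

section SMonoid

variable {κ G : Type} [Field κ] [Group G] {σ : G → G → κ}

theorem SMk_of_admissible {k : κ} {U : Set G} {g : G}
    (h : k ≠ 0 ∧ U ∈ Omega σ ∧ U.Finite ∧ g ∈ U) : SMk σ k U g = some ⟨(k, U, g), h⟩ :=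
  dif_pos h

theorem SMk_of_not_admissible {k : κ} {U : Set G} {g : G}
    (h : ¬(k ≠ 0 ∧ U ∈ Omega σ ∧ U.Finite ∧ g ∈ U)) : SMk σ k U g = none :=
  dif_neg h

theorem SMk_val (a : SElt σ) : SMk σ a.1.1 a.1.2.1 a.1.2.2 = some a :=
  SMk_of_admissible a.2

theorem val_eq_of_SMk_eq_some {k : κ} {U : Set G} {g : G} {a : SElt σ}
    (h : SMk σ k U g = some a) : a.1 = (k, U, g) := by
  unfold SMk at h
  split at h
  · cases h
    rfl
  · cases h

theorem exists_eq_SMk (x : Option (SElt σ)) :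
    ∃ (k : κ) (U : Set G) (g : G), (1 : G) ∈ U ∧ g ∈ U ∧ x = SMk σ k U g := by
  rcases x with _ | a
  · exact ⟨0, {1}, 1, rfl, rfl, (SMk_of_not_admissible fun h => h.1 rfl).symm⟩
  · exact ⟨a.1.1, a.1.2.1, a.1.2.2, a.2.2.1.1, a.2.2.2.2, (SMk_val a).symm⟩

theorem SMk_congr_coeff {k k' : κ} {U : Set G} {g : G} (h : U ∈ Omega σ → k = k') :
    SMk σ k U g = SMk σ k' U g := by
  by_cases hU : U ∈ Omega σ
  · rw [h hU]
  · rw [SMk_of_not_admissible (fun h => hU h.2.1), SMk_of_not_admissible (fun h => hU h.2.1)]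

theorem SMk_inj_coeff {k k' : κ} {U : Set G} {g : G} (hU : U ∈ Omega σ) (hUf : U.Finite)
    (hg : g ∈ U) : SMk σ k U g = SMk σ k' U g ↔ k = k' := by
  refine ⟨fun h => ?_, fun h => h ▸ rfl⟩
  by_cases hk : k = 0 <;> by_cases hk' : k' = 0
  · rw [hk, hk']
  · rw [SMk_of_not_admissible (fun h => h.1 hk), SMk_of_admissible ⟨hk', hU, hUf, hg⟩] at h
    cases h
  · rw [SMk_of_not_admissible (fun h => h.1 hk'), SMk_of_admissible ⟨hk, hU, hUf, hg⟩] at h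
    cases h
  · rw [SMk_of_admissible ⟨hk, hU, hUf, hg⟩, SMk_of_admissible ⟨hk', hU, hUf, hg⟩] at h
    exact congrArg (fun a : SElt σ => a.1.1) (Option.some_injective _ h)

theorem mul_mem_union_image {U V : Set G} (g : G) {h : G} (hh : h ∈ V) :
    g * h ∈ U ∪ (fun t => g * t) '' V :=
  Or.inr ⟨h, hh, rfl⟩

theorem SMul'_SMk_SMk {k r : κ} {U V : Set G} {g h : G} (hU : (1 : G) ∈ U) (hg : g ∈ U)
    (hV : (1 : G) ∈ V) (hh : h ∈ V) :
    SMul' σ (SMk σ k U g) (SMk σ r V h) =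
      SMk σ (σ g h * (k * r)) (U ∪ (fun t => g * t) '' V) (g * h) := by
  by_cases hx : k ≠ 0 ∧ U ∈ Omega σ ∧ U.Finite ∧ g ∈ U
  · by_cases hy : r ≠ 0 ∧ V ∈ Omega σ ∧ V.Finite ∧ h ∈ V
    · rw [SMk_of_admissible hx, SMk_of_admissible hy]
      rfl
    · have hW : SMk σ (σ g h * (k * r)) (U ∪ (fun t => g * t) '' V) (g * h) = none := by
        refine SMk_of_not_admissible fun ⟨hc, hW, hWf, _⟩ => hy ⟨?_, ?_, ?_, hh⟩
        · exact right_ne_zero_of_mul (right_ne_zero_of_mul hc)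
        · exact mem_omega_of_mapsTo hW hV fun t ht => mul_mem_union_image g ht
        · exact (hWf.subset Set.subset_union_right).of_finite_image (mul_right_injective g).injOn
      rw [hW, SMk_of_not_admissible hy]
      cases SMk σ k U g <;> rfl
  · have hW : SMk σ (σ g h * (k * r)) (U ∪ (fun t => g * t) '' V) (g * h) = none := by
      refine SMk_of_not_admissible fun ⟨hc, hW, hWf, _⟩ => hx ⟨?_, ?_, ?_, hg⟩
      · exact left_ne_zero_of_mul (right_ne_zero_of_mul hc)
      · exact mem_omega_of_subset hW hU Set.subset_union_left
      · exact hWf.subset Set.subset_union_left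
    rw [hW, SMk_of_not_admissible hx]
    rfl

theorem SMul'_assoc (x y z : Option (SElt σ)) :
    SMul' σ (SMul' σ x y) z = SMul' σ x (SMul' σ y z) := by
  obtain ⟨ka, Ua, ga, h1a, hga, rfl⟩ := exists_eq_SMk x
  obtain ⟨kb, Ub, gb, h1b, hgb, rfl⟩ := exists_eq_SMk y
  obtain ⟨kc, Uc, gc, h1c, hgc, rfl⟩ := exists_eq_SMk z
  rw [SMul'_SMk_SMk h1a hga h1b hgb, SMul'_SMk_SMk h1b hgb h1c hgc,
    SMul'_SMk_SMk (Set.mem_union_left _ h1a) (mul_mem_union_image ga hgb) h1c hgc,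
    SMul'_SMk_SMk h1a hga (Set.mem_union_left _ h1b) (mul_mem_union_image gb hgc)]
  have hW : Ua ∪ (fun t => ga * t) '' (Ub ∪ (fun t => gb * t) '' Uc) =
      Ua ∪ (fun t => ga * t) '' Ub ∪ (fun t => ga * gb * t) '' Uc := by
    simp only [Set.image_union, Set.image_image, mul_assoc, Set.union_assoc]
  rw [hW, ← mul_assoc ga gb gc]
  refine SMk_congr_coeff fun hF => ?_
  have hcocycle := sigma_cocycle_of_mem_omega hF (Or.inl (Or.inl hga))
    (Or.inl (mul_mem_union_image ga hgb)) (mul_mem_union_image (ga * gb) hgc)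
  linear_combination (ka * kb * kc) * hcocycle.symm

theorem SMk_one_SMul' (hσ : IsFactorSet σ) (x : Option (SElt σ)) :
    SMul' σ (SMk σ 1 {1} 1) x = x := by
  obtain ⟨k, U, g, h1, hg, rfl⟩ := exists_eq_SMk x
  rw [SMul'_SMk_SMk (Set.mem_singleton 1) (Set.mem_singleton 1) h1 hg]
  simp only [one_mul, Set.image_id', Set.singleton_union, Set.insert_eq_of_mem h1]
  exact SMk_congr_coeff fun hU => by rw [sigma_one_left_of_mem_omega hσ hU hg, one_mul]

theorem SMul'_SMk_one (hσ : IsFactorSet σ) (x : Option (SElt σ)) :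
    SMul' σ x (SMk σ 1 {1} 1) = x := by
  obtain ⟨k, U, g, h1, hg, rfl⟩ := exists_eq_SMk x
  rw [SMul'_SMk_SMk h1 hg (Set.mem_singleton 1) (Set.mem_singleton 1)]
  simp only [mul_one, Set.image_singleton, Set.union_singleton, Set.insert_eq_of_mem hg]
  exact SMk_congr_coeff fun hU => by rw [sigma_one_right_of_mem_omega hσ hU hg, one_mul]

section Inverse

variable {U : Set G} {g : G}

theorem image_inv_mul_mem_omega (hU : U ∈ Omega σ) (hg : g ∈ U) :
    (fun t => g⁻¹ * t) '' U ∈ Omega σ :=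
  mem_omega_of_mapsTo (g := g) hU ⟨g, hg, inv_mul_cancel g⟩ fun _ ⟨u, hu, hut⟩ => by
    simpa [← hut] using hu

theorem image_mul_image_inv_mul (g : G) (U : Set G) :
    (fun t => g * t) '' ((fun t => g⁻¹ * t) '' U) = U := by
  rw [Set.image_image]
  simp

variable {k : κ}

theorem SMk_mul_inv_mul (hσ : IsFactorSet σ) (hx : SMk σ k U g ≠ none) :
    SMul' σ (SMk σ k U g)
        (SMul' σ (SMk σ ((σ g g⁻¹)⁻¹ * k⁻¹) ((fun t => g⁻¹ * t) '' U) g⁻¹) (SMk σ k U g)) =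
      SMk σ k U g := by
  obtain ⟨hk, hU, -, hg⟩ := not_not.1 (mt SMk_of_not_admissible hx)
  have h1 : (1 : G) ∈ (fun t => g⁻¹ * t) '' U := ⟨g, hg, inv_mul_cancel g⟩
  rw [SMul'_SMk_SMk h1 ⟨1, hU.1, mul_one _⟩ hU.1 hg, Set.union_self, inv_mul_cancel,
    SMul'_SMk_SMk hU.1 hg h1 h1, image_mul_image_inv_mul, Set.union_self, mul_one]
  refine SMk_congr_coeff fun _ => ?_
  rw [sigma_one_right_of_mem_omega hσ hU hg, ← sigma_mul_inv_comm_of_mem_omega hσ hU hg]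
  field_simp [sigma_mul_inv_ne_zero_of_mem_omega hU hg]

theorem SMk_inv_mul_inv (hσ : IsFactorSet σ) (hx : SMk σ k U g ≠ none) :
    SMul' σ (SMk σ ((σ g g⁻¹)⁻¹ * k⁻¹) ((fun t => g⁻¹ * t) '' U) g⁻¹)
        (SMul' σ (SMk σ k U g) (SMk σ ((σ g g⁻¹)⁻¹ * k⁻¹) ((fun t => g⁻¹ * t) '' U) g⁻¹)) =
      SMk σ ((σ g g⁻¹)⁻¹ * k⁻¹) ((fun t => g⁻¹ * t) '' U) g⁻¹ := by
  obtain ⟨hk, hU, -, hg⟩ := not_not.1 (mt SMk_of_not_admissible hx)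
  have h1 : (1 : G) ∈ (fun t => g⁻¹ * t) '' U := ⟨g, hg, inv_mul_cancel g⟩
  have hginv : g⁻¹ ∈ (fun t => g⁻¹ * t) '' U := ⟨1, hU.1, mul_one _⟩
  rw [SMul'_SMk_SMk hU.1 hg h1 hginv, image_mul_image_inv_mul, Set.union_self, mul_inv_cancel,
    SMul'_SMk_SMk h1 hginv hU.1 hU.1, Set.union_self, mul_one]
  refine SMk_congr_coeff fun _ => ?_
  rw [sigma_one_right_of_mem_omega hσ (image_inv_mul_mem_omega hU hg) hginv]
  field_simp [sigma_mul_inv_ne_zero_of_mem_omega hU hg]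

end Inverse

theorem SElt.snd_snd_eq_one_of_SMul'_self {a : SElt σ} (h : SMul' σ (some a) (some a) = some a) :
    a.1.2.2 = 1 :=
  mul_eq_left.1 (congrArg (fun p => p.2.2) (val_eq_of_SMk_eq_some h)).symm

theorem SMul'_self_eq_self_iff (hσ : IsFactorSet σ) (a : SElt σ) :
    SMul' σ (some a) (some a) = some a ↔ a.1.1 = 1 ∧ a.1.2.2 = 1 := by
  rcases a with ⟨⟨k, U, g⟩, hk, hU, hUf, hg⟩
  have hσ11 : σ 1 1 = 1 := sigma_one_left_of_mem_omega hσ hU hU.1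
  refine ⟨fun h => ?_, fun ⟨hk1, hg1⟩ => ?_⟩
  · obtain rfl : g = 1 := SElt.snd_snd_eq_one_of_SMul'_self h
    have hkk : σ 1 1 * (k * k) = k := congrArg Prod.fst (val_eq_of_SMk_eq_some h).symm
    rw [hσ11, one_mul, mul_eq_left₀ hk] at hkk
    exact ⟨hkk, rfl⟩
  · obtain ⟨rfl, rfl⟩ : k = 1 ∧ g = 1 := ⟨hk1, hg1⟩
    show SMk σ (σ 1 1 * (1 * 1)) (U ∪ (fun t => 1 * t) '' U) (1 * 1) = _
    simp only [hσ11, one_mul, Set.image_id', Set.union_self]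
    exact SMk_of_admissible _

theorem SMul'_comm_of_idempotent {x y : Option (SElt σ)} (hx : SMul' σ x x = x)
    (hy : SMul' σ y y = y) : SMul' σ x y = SMul' σ y x := by
  rcases x with _ | a
  · cases y <;> rfl
  rcases y with _ | b
  · rfl
  have ha := SElt.snd_snd_eq_one_of_SMul'_self hx
  have hb := SElt.snd_snd_eq_one_of_SMul'_self hy
  show SMk σ _ _ _ = SMk σ _ _ _
  simp only [ha, hb, one_mul, Set.image_id', Set.union_comm, mul_comm]

theorem SSmul_right_cancel {r t : κ} {x : Option (SElt σ)} (hx : x ≠ none)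
    (h : SSmul σ r x = SSmul σ t x) : r = t := by
  rcases x with _ | ⟨⟨k, U, g⟩, hk, hU, hUf, hg⟩
  · exact absurd rfl hx
  exact mul_right_cancel₀ hk ((SMk_inj_coeff hU hUf hg).1 h)

end SMonoid

/-- `𝒮^σ(G)` is a `κ`-cancellative inverse monoid: the product is associative, has
unit `({1},1)`, the inverse of `k(U,g)` is `σ(g,g⁻¹)⁻¹k⁻¹(g⁻¹U, g⁻¹)`, idempotents
commute, the `κ`-action is cancellative, and the nonzero idempotents are exactly the
elements `(U,1)`. -/
theorem stmt_9 {κ G : Type} [Field κ] [Group G] (σ : G → G → κ)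
    (hσ : IsFactorSet σ) :
    (∀ x y z : Option (SElt σ), SMul' σ (SMul' σ x y) z = SMul' σ x (SMul' σ y z)) ∧
    (∀ x : Option (SElt σ), SMul' σ (SMk σ 1 {1} 1) x = x ∧ SMul' σ x (SMk σ 1 {1} 1) = x) ∧
    (∀ (k : κ) (U : Set G) (g : G), SMk σ k U g ≠ none →
      SMul' σ (SMk σ k U g)
          (SMul' σ (SMk σ ((σ g g⁻¹)⁻¹ * k⁻¹) ((fun t => g⁻¹ * t) '' U) g⁻¹) (SMk σ k U g))
        = SMk σ k U g ∧
      SMul' σ (SMk σ ((σ g g⁻¹)⁻¹ * k⁻¹) ((fun t => g⁻¹ * t) '' U) g⁻¹)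
          (SMul' σ (SMk σ k U g) (SMk σ ((σ g g⁻¹)⁻¹ * k⁻¹) ((fun t => g⁻¹ * t) '' U) g⁻¹))
        = SMk σ ((σ g g⁻¹)⁻¹ * k⁻¹) ((fun t => g⁻¹ * t) '' U) g⁻¹) ∧
    (∀ x y : Option (SElt σ), SMul' σ x x = x → SMul' σ y y = y →
      SMul' σ x y = SMul' σ y x) ∧
    (∀ (r t : κ) (x : Option (SElt σ)), x ≠ none → SSmul σ r x = SSmul σ t x → r = t) ∧
    (∀ a : SElt σ, SMul' σ (some a) (some a) = some a ↔ a.1.1 = 1 ∧ a.1.2.2 = 1) :=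
  ⟨SMul'_assoc, fun x => ⟨SMk_one_SMul' hσ x, SMul'_SMk_one hσ x⟩,
    fun _ _ _ hx => ⟨SMk_mul_inv_mul hσ hx, SMk_inv_mul_inv hσ hx⟩,
    fun _ _ => SMul'_comm_of_idempotent, fun _ _ _ => SSmul_right_cancel,
    SMul'_self_eq_self_iff hσ⟩
end

section
/- Assume κ is algebraically closed and σ is a factor set normalized so that σ(g,g⁻¹) ∈ {0,1} for all g. Define ∂(σ)(x,y,z) := σ(x,y) σ(xy,z) σ(z⁻¹y⁻¹, x⁻¹) σ(z⁻¹, y⁻¹). Then for every even permutation γ ∈ A₄, ∂(σ)(γ ▷ (x,y,z)) = ∂(σ)(x,y,z); moreover ∂(σ)(x,y,z) = 0 iff ∂(σ)((0,2) ▷ (x,y,z)) = 0, and if ∂(σ)(x,y,z) ≠ 0 then ∂(σ)((0,2) ▷ (x,y,z)) = ∂(σ)(x,y,z)⁻¹. -/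
/-- The map `γ ▷ (x,y,z)`: permute the tuple `(1, x, xy, xyz)` by `γ` (acting on
positions via `γ⁻¹`) and take consecutive quotients. -/
def permAct {G : Type} [Group G] (γ : Equiv.Perm (Fin 4)) (p : G × G × G) : G × G × G :=
  let u : Fin 4 → G := ![1, p.1, p.1 * p.2.1, p.1 * p.2.1 * p.2.2]
  let v : Fin 4 → G := fun i => u (γ⁻¹ i)
  ((v 0)⁻¹ * v 1, (v 1)⁻¹ * v 2, (v 2)⁻¹ * v 3)

/-- `∂(σ)(x,y,z) = σ(x,y) σ(xy,z) σ(z⁻¹y⁻¹, x⁻¹) σ(z⁻¹, y⁻¹)`. -/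
def dcob {κ G : Type} [Field κ] [Group G] (σ : G → G → κ) (p : G × G × G) : κ :=
  σ p.1 p.2.1 * σ (p.1 * p.2.1) p.2.2 * σ (p.2.2⁻¹ * p.2.1⁻¹) p.1⁻¹ * σ p.2.2⁻¹ p.2.1⁻¹

/-! Write `ω(g, h, k) = σ(g⁻¹h, h⁻¹k)` for the value of `σ` on the triangle with vertices
`g, h, k`. In the ring of a partial projective representation the normalization makes every
`Γ g` regular, `Γ g Γ g⁻¹ Γ g = Γ g`; expanding `Γ a⁻¹ Γ a Γ b Γ (b⁻¹a⁻¹)` and `Γ a Γ b` in two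
ways and cancelling a nonzero element gives `σ(a, b) = σ(b, b⁻¹a⁻¹)` and
`σ(b⁻¹, a⁻¹) = σ(a, b)⁻¹`, i.e. `ω` is invariant under rotation and inverted by reversal.
Now `∂(σ)(x, y, z)` is the product of `ω` over the oriented faces of the tetrahedron with
vertices `1, x, xy, xyz`, and `γ ▷` permutes these vertices. For an alternating `ω` every
adjacent transposition of the vertices inverts this product, so
`∂(σ)(γ ▷ p) = ∂(σ)(p) ^ sign γ`. -/

section Alternating

variable {α K : Type*} [CommGroupWithZero K] {ω : α → α → α → K}

structure IsAlternatingCochain (ω : α → α → α → K) : Prop where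
  rotate : ∀ a b c, ω a b c = ω b c a
  reverse : ∀ a b c, ω c b a = (ω a b c)⁻¹

-- Faces in the order of `dcob`; this is the inverse of the usual simplicial coboundary.
def coboundary (ω : α → α → α → K) (v : Fin 4 → α) : K :=
  ω (v 0) (v 1) (v 2) * ω (v 0) (v 2) (v 3) * ω (v 3) (v 1) (v 0) * ω (v 3) (v 2) (v 1)

namespace IsAlternatingCochain

theorem swap_left (hω : IsAlternatingCochain ω) (a b c : α) : ω b a c = (ω a b c)⁻¹ := by
  rw [hω.reverse c a b, hω.rotate c a b]

theorem swap_right (hω : IsAlternatingCochain ω) (a b c : α) : ω a c b = (ω a b c)⁻¹ := by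
  rw [hω.rotate, hω.swap_left, ← hω.rotate]

theorem coboundary_eq (hω : IsAlternatingCochain ω) (v : Fin 4 → α) :
    coboundary ω v = ω (v 0) (v 1) (v 2) * ω (v 0) (v 2) (v 3) /
      (ω (v 0) (v 1) (v 3) * ω (v 1) (v 2) (v 3)) := by
  rw [coboundary, hω.reverse (v 0) (v 1) (v 3), hω.reverse (v 1) (v 2) (v 3), div_eq_mul_inv,
    mul_inv, mul_assoc]

theorem coboundary_comp_swap_castSucc_succ (hω : IsAlternatingCochain ω) (v : Fin 4 → α)
    (i : Fin 3) : coboundary ω (v ∘ Equiv.swap i.castSucc i.succ) = (coboundary ω v)⁻¹ := by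
  fin_cases i <;>
    simp only [Fin.zero_eta, Fin.mk_one, Fin.reduceFinMk, Fin.isValue, Fin.castSucc_zero,
      Fin.succ_zero_eq_one, Fin.castSucc_one, Fin.succ_one_eq_two, Fin.reduceCastSucc,
      Fin.reduceSucc, hω.coboundary_eq, inv_div, Function.comp_apply, Equiv.swap_apply_left,
      Equiv.swap_apply_right, Equiv.swap_apply_of_ne_of_ne, ne_eq, Fin.reduceEq,
      not_false_eq_true, zero_ne_one]
  · rw [hω.swap_left (v 0), hω.swap_left (v 0) (v 1) (v 3)]
    simp only [div_eq_mul_inv, mul_inv, inv_inv]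
    ac_rfl
  · rw [hω.swap_right (v 0), hω.swap_left (v 1) (v 2) (v 3)]
    simp only [div_eq_mul_inv, mul_inv, inv_inv]
    ac_rfl
  · rw [hω.swap_right (v 0) (v 2), hω.swap_right (v 1) (v 2) (v 3)]
    simp only [div_eq_mul_inv, mul_inv, inv_inv]
    ac_rfl

theorem coboundary_comp_perm (hω : IsAlternatingCochain ω) (v : Fin 4 → α)
    (γ : Equiv.Perm (Fin 4)) :
    coboundary ω (v ∘ γ) = coboundary ω v ^ (Equiv.Perm.sign γ : ℤ) := by
  have hγ : γ ∈ Submonoid.closure (Set.range fun i : Fin 3 ↦ Equiv.swap i.castSucc i.succ) := by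
    rw [Equiv.Perm.mclosure_swap_castSucc_succ]
    exact Submonoid.mem_top γ
  induction hγ using Submonoid.closure_induction generalizing v with
  | mem _ h =>
    obtain ⟨i, rfl⟩ := h
    rw [hω.coboundary_comp_swap_castSucc_succ, Equiv.Perm.sign_swap Fin.castSucc_lt_succ.ne,
      Units.val_neg, Units.val_one, zpow_neg_one]
  | one => simp
  | mul γ δ _ _ hγ hδ =>
    rw [Equiv.Perm.coe_mul, ← Function.comp_assoc, hδ, hγ, ← zpow_mul, map_mul, Units.val_mul,
      mul_comm]

end IsAlternatingCochain

end Alternating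

namespace IsPartialProjRep

variable {κ G R : Type} [Field κ] [Group G] [Ring R] [Algebra κ R] {σ : G → G → κ} {Γ : G → R}

theorem factor_mul_inv_eq_one (hΓ : IsPartialProjRep σ R Γ)
    (hnorm : ∀ g : G, σ g g⁻¹ = 0 ∨ σ g g⁻¹ = 1) {g : G} (hg : Γ g ≠ 0) : σ g g⁻¹ = 1 :=
  (hnorm g).resolve_left fun h ↦ hg (by simpa [hΓ.1] using (hΓ.2.1 g g⁻¹ h).2)

theorem mul_mul_inv_mul_self (hΓ : IsPartialProjRep σ R Γ)
    (hnorm : ∀ g : G, σ g g⁻¹ = 0 ∨ σ g g⁻¹ = 1) (g : G) : Γ g * Γ g⁻¹ * Γ g = Γ g := by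
  by_cases hg : Γ g = 0
  · simp [hg]
  · simpa [hΓ.1, hΓ.factor_mul_inv_eq_one hnorm hg] using hΓ.2.2.2.2 g g⁻¹

theorem mul_eq_factor_smul_right (hΓ : IsPartialProjRep σ R Γ)
    (hnorm : ∀ g : G, σ g g⁻¹ = 0 ∨ σ g g⁻¹ = 1) (g h : G) :
    Γ g * Γ h = σ g h • (Γ (g * h) * Γ h⁻¹ * Γ h) := by
  calc Γ g * Γ h = Γ g * Γ h * Γ h⁻¹ * Γ h := by
        rw [mul_assoc (Γ g), mul_assoc (Γ g), hΓ.mul_mul_inv_mul_self hnorm]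
    _ = σ g h • (Γ (g * h) * Γ h⁻¹ * Γ h) := by rw [hΓ.2.2.2.2, smul_mul_assoc]

theorem mul_eq_factor_smul_left (hΓ : IsPartialProjRep σ R Γ)
    (hnorm : ∀ g : G, σ g g⁻¹ = 0 ∨ σ g g⁻¹ = 1) (g h : G) :
    Γ g * Γ h = σ g h • (Γ g * Γ g⁻¹ * Γ (g * h)) := by
  calc Γ g * Γ h = Γ g * (Γ g⁻¹ * Γ g * Γ h) := by
        rw [← mul_assoc, ← mul_assoc, hΓ.mul_mul_inv_mul_self hnorm]
    _ = σ g h • (Γ g * Γ g⁻¹ * Γ (g * h)) := by rw [hΓ.2.2.2.1, mul_smul_comm, mul_assoc]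

theorem inv_mul_mul_eq_zero_iff (hΓ : IsPartialProjRep σ R Γ)
    (hnorm : ∀ g : G, σ g g⁻¹ = 0 ∨ σ g g⁻¹ = 1) (a b : G) :
    Γ a⁻¹ * Γ (a * b) * Γ (b⁻¹ * a⁻¹) = 0 ↔ σ a b = 0 := by
  refine ⟨fun h ↦ hΓ.2.2.1 a b ?_, fun h ↦ by rw [(hΓ.2.1 a b h).1, zero_mul]⟩
  have hreg := hΓ.mul_mul_inv_mul_self hnorm (a * b)
  rw [mul_inv_rev] at hreg
  calc Γ a * Γ b = σ a b • (Γ a * Γ a⁻¹ * (Γ (a * b) * Γ (b⁻¹ * a⁻¹) * Γ (a * b))) := by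
        rw [hreg, hΓ.mul_eq_factor_smul_left hnorm]
    _ = σ a b • (Γ a * (Γ a⁻¹ * Γ (a * b) * Γ (b⁻¹ * a⁻¹)) * Γ (a * b)) := by
        simp only [mul_assoc]
    _ = 0 := by rw [h, mul_zero, zero_mul, smul_zero]

theorem mul_eq_factor_smul_inv_mul_mul (hΓ : IsPartialProjRep σ R Γ)
    (hnorm : ∀ g : G, σ g g⁻¹ = 0 ∨ σ g g⁻¹ = 1) (a b : G) :
    Γ b * Γ (b⁻¹ * a⁻¹) =
      σ b (b⁻¹ * a⁻¹) • (Γ a⁻¹ * Γ (a * b) * Γ (b⁻¹ * a⁻¹)) := by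
  have hw : b * (b⁻¹ * a⁻¹) = a⁻¹ := by group
  have hw' : (b⁻¹ * a⁻¹)⁻¹ = a * b := by group
  rw [hΓ.mul_eq_factor_smul_right hnorm, hw, hw']

theorem factor_smul_inv_mul_mul_eq (hΓ : IsPartialProjRep σ R Γ)
    (hnorm : ∀ g : G, σ g g⁻¹ = 0 ∨ σ g g⁻¹ = 1) (a b : G) :
    σ a b • (Γ a⁻¹ * Γ (a * b) * Γ (b⁻¹ * a⁻¹)) =
      σ b (b⁻¹ * a⁻¹) • (Γ a⁻¹ * Γ (a * b) * Γ (b⁻¹ * a⁻¹)) := by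
  have hreg := hΓ.mul_mul_inv_mul_self hnorm a⁻¹
  rw [inv_inv] at hreg
  calc σ a b • (Γ a⁻¹ * Γ (a * b) * Γ (b⁻¹ * a⁻¹))
      = Γ a⁻¹ * Γ a * (Γ b * Γ (b⁻¹ * a⁻¹)) := by
        rw [← smul_mul_assoc, ← hΓ.2.2.2.1, mul_assoc]
    _ = σ b (b⁻¹ * a⁻¹) • (Γ a⁻¹ * Γ (a * b) * Γ (b⁻¹ * a⁻¹)) := by
        rw [hΓ.mul_eq_factor_smul_inv_mul_mul hnorm, mul_smul_comm]
        simp only [← mul_assoc, hreg]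

theorem factor_rotate (hΓ : IsPartialProjRep σ R Γ)
    (hnorm : ∀ g : G, σ g g⁻¹ = 0 ∨ σ g g⁻¹ = 1) (a b : G) :
    σ a b = σ b (b⁻¹ * a⁻¹) := by
  by_cases hab : σ a b = 0
  · rw [hab, eq_comm]
    apply hΓ.2.2.1
    rw [hΓ.mul_eq_factor_smul_inv_mul_mul hnorm, (hΓ.inv_mul_mul_eq_zero_iff hnorm a b).2 hab,
      smul_zero]
  · exact smul_left_injective κ (mt (hΓ.inv_mul_mul_eq_zero_iff hnorm a b).1 hab)
      (hΓ.factor_smul_inv_mul_mul_eq hnorm a b)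

theorem factor_mul_factor_inv_inv (hΓ : IsPartialProjRep σ R Γ)
    (hnorm : ∀ g : G, σ g g⁻¹ = 0 ∨ σ g g⁻¹ = 1) {a b : G} (hab : σ a b ≠ 0) :
    σ a b * σ b⁻¹ a⁻¹ = 1 := by
  have hback := hΓ.2.2.2.2 (a * b) b⁻¹
  rw [mul_inv_cancel_right, inv_inv] at hback
  have hrot := hΓ.factor_rotate hnorm (a * b) b⁻¹
  rw [inv_inv, mul_inv_rev, mul_inv_cancel_left] at hrot
  have hloop : (1 : κ) • (Γ a * Γ b) = (σ a b * σ b⁻¹ a⁻¹) • (Γ a * Γ b) := by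
    rw [one_smul, mul_smul, ← hrot, ← hback, ← hΓ.mul_eq_factor_smul_right hnorm]
  exact (smul_left_injective κ (mt (hΓ.2.2.1 a b) hab) hloop).symm

theorem factor_inv_inv (hΓ : IsPartialProjRep σ R Γ)
    (hnorm : ∀ g : G, σ g g⁻¹ = 0 ∨ σ g g⁻¹ = 1) (a b : G) :
    σ b⁻¹ a⁻¹ = (σ a b)⁻¹ := by
  by_cases hab : σ a b = 0
  · rw [hab, inv_zero]
    by_contra hne
    have := hΓ.factor_mul_factor_inv_inv hnorm hne
    rw [inv_inv, inv_inv, hab, mul_zero] at this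
    exact zero_ne_one this
  · exact eq_inv_of_mul_eq_one_right (hΓ.factor_mul_factor_inv_inv hnorm hab)

end IsPartialProjRep

section Triangle

variable {κ G : Type*} [CommGroupWithZero κ] [Group G]

def triangle (σ : G → G → κ) (g h k : G) : κ := σ (g⁻¹ * h) (h⁻¹ * k)

theorem isAlternatingCochain_triangle {σ : G → G → κ}
    (hrot : ∀ a b : G, σ a b = σ b (b⁻¹ * a⁻¹)) (hinv : ∀ a b : G, σ b⁻¹ a⁻¹ = (σ a b)⁻¹) :
    IsAlternatingCochain (triangle σ) where
  rotate g h k := by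
    rw [triangle, triangle, hrot]
    congr 1
    group
  reverse g h k := by
    rw [triangle, triangle, ← hinv]
    congr 1 <;> group

def partialProducts (p : G × G × G) : Fin 4 → G := ![1, p.1, p.1 * p.2.1, p.1 * p.2.1 * p.2.2]

def consecutiveQuotients (v : Fin 4 → G) : G × G × G :=
  ((v 0)⁻¹ * v 1, (v 1)⁻¹ * v 2, (v 2)⁻¹ * v 3)

theorem consecutiveQuotients_partialProducts (p : G × G × G) :
    consecutiveQuotients (partialProducts p) = p := by
  obtain ⟨x, y, z⟩ := p
  simp [consecutiveQuotients, partialProducts, mul_assoc]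

end Triangle

theorem permAct_eq {G : Type} [Group G] (γ : Equiv.Perm (Fin 4)) (p : G × G × G) :
    permAct γ p = consecutiveQuotients (partialProducts p ∘ ⇑γ⁻¹) := rfl

theorem dcob_consecutiveQuotients {κ G : Type} [Field κ] [Group G] (σ : G → G → κ)
    (v : Fin 4 → G) : dcob σ (consecutiveQuotients v) = coboundary (triangle σ) v := by
  simp only [dcob, consecutiveQuotients, coboundary, triangle, mul_inv_rev, inv_inv]
  group

theorem dcob_permAct {κ G : Type} [Field κ] [Group G] {σ : G → G → κ}
    (hrot : ∀ a b : G, σ a b = σ b (b⁻¹ * a⁻¹)) (hinv : ∀ a b : G, σ b⁻¹ a⁻¹ = (σ a b)⁻¹)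
    (γ : Equiv.Perm (Fin 4)) (p : G × G × G) :
    dcob σ (permAct γ p) = dcob σ p ^ (Equiv.Perm.sign γ : ℤ) := by
  conv_rhs => rw [← consecutiveQuotients_partialProducts p]
  rw [permAct_eq, dcob_consecutiveQuotients, dcob_consecutiveQuotients,
    (isAlternatingCochain_triangle hrot hinv).coboundary_comp_perm, Equiv.Perm.sign_inv]

theorem stmt_14_general {κ G : Type} [Field κ] [Group G]
    (σ : G → G → κ) (hσ : IsFactorSet σ)
    (hnorm : ∀ g : G, σ g g⁻¹ = 0 ∨ σ g g⁻¹ = 1)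
    (p : G × G × G) :
    (∀ γ : Equiv.Perm (Fin 4), Equiv.Perm.sign γ = 1 → dcob σ (permAct γ p) = dcob σ p) ∧
    (dcob σ p = 0 ↔ dcob σ (permAct (Equiv.swap 0 2) p) = 0) ∧
    (dcob σ p ≠ 0 → dcob σ (permAct (Equiv.swap 0 2) p) = (dcob σ p)⁻¹) := by
  obtain ⟨R, _, _, Γ, hΓ⟩ := hσ
  have hperm := dcob_permAct (hΓ.factor_rotate hnorm) (hΓ.factor_inv_inv hnorm)
  have hswap : dcob σ (permAct (Equiv.swap 0 2) p) = (dcob σ p)⁻¹ := by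
    rw [hperm, Equiv.Perm.sign_swap (by decide), Units.val_neg, Units.val_one, zpow_neg_one]
  refine ⟨fun γ hγ ↦ by rw [hperm, hγ, Units.val_one, zpow_one], ?_, fun _ ↦ hswap⟩
  rw [hswap, inv_eq_zero]

/-- `∂(σ)` is invariant under even permutations in the `S₄`-action, and the odd
permutation `(0,2)` kills/inverts it. -/
theorem stmt_14 {κ G : Type} [Field κ] [IsAlgClosed κ] [Group G]
    (σ : G → G → κ) (hσ : IsFactorSet σ)
    (hnorm : ∀ g : G, σ g g⁻¹ = 0 ∨ σ g g⁻¹ = 1)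
    (p : G × G × G) :
    (∀ γ : Equiv.Perm (Fin 4), Equiv.Perm.sign γ = 1 → dcob σ (permAct γ p) = dcob σ p) ∧
    (dcob σ p = 0 ↔ dcob σ (permAct (Equiv.swap 0 2) p) = 0) ∧
    (dcob σ p ≠ 0 → dcob σ (permAct (Equiv.swap 0 2) p) = (dcob σ p)⁻¹) :=
  stmt_14_general σ hσ hnorm p
end

section
/- Let σ be a factor set with total domain (σ(g,h) ≠ 0 for all g,h) over an algebraically closed field κ, normalized so σ(g,g⁻¹) = 1. Then in κ_par^σ G: [x]^σ[y]^σ[z]^σ = 0 if and only if σ(x,y)σ(xy,z) ≠ σ(x,yz)σ(y,z). -/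
/-- The defining relations of the twisted partial group algebra `κ_par^σ G` for a
family of generators `Γ g = [g]^σ`. -/
def TPGARel {κ G R : Type} [Field κ] [Group G] [Ring R] [Algebra κ R]
    (σ : G → G → κ) (Γ : G → R) : Prop :=
  (∀ g h : G, σ g h = 0 → Γ g⁻¹ * Γ (g * h) = 0 ∧ Γ (g * h) * Γ h⁻¹ = 0) ∧
  (∀ g h : G, Γ g⁻¹ * Γ g * Γ h = σ g h • (Γ g⁻¹ * Γ (g * h))) ∧
  (∀ g h : G, Γ g * Γ h * Γ h⁻¹ = σ g h • (Γ (g * h) * Γ h⁻¹)) ∧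
  (∀ g : G, Γ g * Γ 1 = Γ g ∧ Γ 1 * Γ g = Γ g)

/-! If the cocycle identity fails at `(x, y, z)`, expanding `[x⁻¹][x][y][z]` with the defining
relations in two ways gives two different multiples of one element, so it vanishes, and hence so
does `[x][y][z] = [x][x⁻¹][x][y][z]`.

Conversely, read the cocycle identity on 3-simplices `(p₀, p₁, p₂, p₃)` of `G` through the triple
`(p₃p₂⁻¹, p₂p₁⁻¹, p₁p₀⁻¹)`. For a normalized factor set with total domain it is invariant under
permuting the vertices and holds on degenerate simplices, so if it holds at `(x, y, z)` it holds
on every simplex with vertices in `S = {1, z, yz, xyz}`. This is exactly what makes the weighted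
partial shifts `e_s ↦ σ(g, s) e_{gs}` on the span of `S` satisfy the relations of `κ_par^σ G`,
and there `[x][y][z]` sends `e_1` to `σ(z, 1)σ(y, z)σ(x, yz) e_{xyz} ≠ 0`. -/

open Function

section

variable {κ G : Type} [Field κ] [Group G]

def IsCocycleAt (σ : G → G → κ) (g h k : G) : Prop :=
  σ g h * σ (g * h) k = σ g (h * k) * σ h k

structure IsTotalNormalizedFactorSet (σ : G → G → κ) : Prop where
  isFactorSet : IsFactorSet σ
  ne_zero : ∀ g h : G, σ g h ≠ 0
  mul_inv : ∀ g : G, σ g g⁻¹ = 1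

theorem IsPartialProjRep.tpgaRel {R : Type} [Ring R] [Algebra κ R] {σ : G → G → κ}
    {Γ : G → R} (h : IsPartialProjRep σ R Γ) : TPGARel σ Γ := by
  obtain ⟨h1, h0, -, h4, h5⟩ := h
  exact ⟨h0, h4, h5, fun g => by simp [h1]⟩

namespace TPGARel

variable {R : Type} [Ring R] [Algebra κ R] {σ : G → G → κ} {Γ : G → R}

theorem mul_inv_mul_self (hΓ : TPGARel σ Γ) (hnorm : ∀ g : G, σ g g⁻¹ = 1) (g : G) :
    Γ g * Γ g⁻¹ * Γ g = Γ g := by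
  simpa [hnorm, (hΓ.2.2.2 g).2] using hΓ.2.2.1 g g⁻¹

theorem mul_eq_smul_mul_inv_mul (hΓ : TPGARel σ Γ) (hnorm : ∀ g : G, σ g g⁻¹ = 1) (a b : G) :
    Γ a * Γ b = σ a b • (Γ (a * b) * Γ b⁻¹ * Γ b) := by
  calc Γ a * Γ b = Γ a * (Γ b * Γ b⁻¹ * Γ b) := by rw [hΓ.mul_inv_mul_self hnorm]
    _ = Γ a * Γ b * Γ b⁻¹ * Γ b := by simp only [mul_assoc]
    _ = σ a b • (Γ (a * b) * Γ b⁻¹ * Γ b) := by rw [hΓ.2.2.1, smul_mul_assoc]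

theorem mul_eq_smul_mul_mul_inv (hΓ : TPGARel σ Γ) (hnorm : ∀ g : G, σ g g⁻¹ = 1) (a b : G) :
    Γ a * Γ b = σ a b • (Γ a * Γ a⁻¹ * Γ (a * b)) := by
  calc Γ a * Γ b = Γ a * (Γ a⁻¹ * Γ a * Γ b) := by
        rw [← mul_assoc, ← mul_assoc, hΓ.mul_inv_mul_self hnorm]
    _ = σ a b • (Γ a * Γ a⁻¹ * Γ (a * b)) := by rw [hΓ.2.1, mul_smul_comm, mul_assoc]

theorem one_left (hΓ : TPGARel σ Γ) {g : G} (hg : Γ g ≠ 0) : σ 1 g = 1 :=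
  smul_left_injective κ hg <| by simpa [(hΓ.2.2.2 _).2] using (hΓ.2.1 1 g).symm

theorem one_right (hΓ : TPGARel σ Γ) {g : G} (hg : Γ g ≠ 0) : σ g 1 = 1 :=
  smul_left_injective κ hg <| by simpa [(hΓ.2.2.2 _).1] using (hΓ.2.2.1 g 1).symm

theorem mul_mul_inv (hΓ : TPGARel σ Γ) (hnorm : ∀ g : G, σ g g⁻¹ = 1) {a b : G}
    (hab : Γ a * Γ b ≠ 0) : σ a b * σ (a * b) b⁻¹ = 1 := by
  refine smul_left_injective κ hab ?_
  have h := hΓ.2.2.1 (a * b) b⁻¹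
  rw [inv_inv, mul_inv_cancel_right] at h
  simp only [one_smul, mul_smul]
  rw [← h, ← hΓ.mul_eq_smul_mul_inv_mul hnorm]

theorem mul_inv_mul (hΓ : TPGARel σ Γ) (hnorm : ∀ g : G, σ g g⁻¹ = 1) {a b : G}
    (hab : Γ a * Γ b ≠ 0) : σ a b * σ a⁻¹ (a * b) = 1 := by
  refine smul_left_injective κ hab ?_
  have h := hΓ.2.1 a⁻¹ (a * b)
  rw [inv_inv, inv_mul_cancel_left] at h
  simp only [one_smul, mul_smul]
  rw [← h, ← hΓ.mul_eq_smul_mul_mul_inv hnorm]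

theorem mul_mul_eq_zero_of_not_isCocycleAt (hΓ : TPGARel σ Γ) (hnorm : ∀ g : G, σ g g⁻¹ = 1)
    {x y z : G} (h : ¬ IsCocycleAt σ x y z) : Γ x * Γ y * Γ z = 0 := by
  have hA : Γ x⁻¹ * (Γ x * Γ y * Γ z) =
      (σ x y * σ (x * y) z) • (Γ x⁻¹ * (Γ (x * (y * z)) * Γ z⁻¹ * Γ z)) := by
    calc Γ x⁻¹ * (Γ x * Γ y * Γ z) = Γ x⁻¹ * Γ x * Γ y * Γ z := by simp only [mul_assoc]
      _ = σ x y • (Γ x⁻¹ * (Γ (x * y) * Γ z)) := by rw [hΓ.2.1, smul_mul_assoc, mul_assoc]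
      _ = _ := by
        rw [hΓ.mul_eq_smul_mul_inv_mul hnorm, mul_smul_comm, smul_smul, mul_assoc x]
  have hB : Γ x⁻¹ * (Γ x * Γ y * Γ z) =
      (σ x (y * z) * σ y z) • (Γ x⁻¹ * (Γ (x * (y * z)) * Γ z⁻¹ * Γ z)) := by
    calc Γ x⁻¹ * (Γ x * Γ y * Γ z) = Γ x⁻¹ * Γ x * (Γ y * Γ z) := by simp only [mul_assoc]
      _ = σ y z • (Γ x⁻¹ * Γ x * Γ (y * z) * (Γ z⁻¹ * Γ z)) := by
        rw [hΓ.mul_eq_smul_mul_inv_mul hnorm y z, mul_smul_comm]; simp only [mul_assoc]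
      _ = _ := by
        rw [hΓ.2.1, smul_mul_assoc, smul_smul, mul_comm (σ y z)]; simp only [mul_assoc]
  have hW : Γ x⁻¹ * (Γ (x * (y * z)) * Γ z⁻¹ * Γ z) = 0 := by
    by_contra hW
    exact h (smul_left_injective κ hW (hA.symm.trans hB))
  calc Γ x * Γ y * Γ z = Γ x * Γ x⁻¹ * Γ x * Γ y * Γ z := by rw [hΓ.mul_inv_mul_self hnorm]
    _ = Γ x * (Γ x⁻¹ * (Γ x * Γ y * Γ z)) := by simp only [mul_assoc]
    _ = 0 := by rw [hA, hW, smul_zero, mul_zero]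

end TPGARel

namespace IsTotalNormalizedFactorSet

variable {σ : G → G → κ}

theorem exists_tpgaRel (hσ : IsTotalNormalizedFactorSet σ) :
    ∃ (R : Type) (_ : Ring R) (_ : Algebra κ R) (Γ : G → R),
      TPGARel σ Γ ∧ ∀ g h : G, Γ g * Γ h ≠ 0 := by
  obtain ⟨R, _, _, Γ, hΓ⟩ := hσ.isFactorSet
  exact ⟨R, _, _, Γ, hΓ.tpgaRel, fun g h hgh => hσ.ne_zero g h (hΓ.2.2.1 g h hgh)⟩

theorem one_left (hσ : IsTotalNormalizedFactorSet σ) (g : G) : σ 1 g = 1 := by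
  obtain ⟨R, _, _, Γ, hΓ, hne⟩ := hσ.exists_tpgaRel
  exact hΓ.one_left (right_ne_zero_of_mul (hne 1 g))

theorem one_right (hσ : IsTotalNormalizedFactorSet σ) (g : G) : σ g 1 = 1 := by
  obtain ⟨R, _, _, Γ, hΓ, hne⟩ := hσ.exists_tpgaRel
  exact hΓ.one_right (left_ne_zero_of_mul (hne g 1))

theorem mul_mul_inv (hσ : IsTotalNormalizedFactorSet σ) (a b : G) :
    σ a b * σ (a * b) b⁻¹ = 1 := by
  obtain ⟨R, _, _, Γ, hΓ, hne⟩ := hσ.exists_tpgaRel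
  exact hΓ.mul_mul_inv hσ.mul_inv (hne a b)

theorem mul_inv_mul (hσ : IsTotalNormalizedFactorSet σ) (a b : G) :
    σ a b * σ a⁻¹ (a * b) = 1 := by
  obtain ⟨R, _, _, Γ, hΓ, hne⟩ := hσ.exists_tpgaRel
  exact hΓ.mul_inv_mul hσ.mul_inv (hne a b)

theorem isCocycleAt_one_right (hσ : IsTotalNormalizedFactorSet σ) (g h : G) :
    IsCocycleAt σ g h 1 := by
  simp [IsCocycleAt, hσ.one_right]

end IsTotalNormalizedFactorSet

namespace IsCocycleAt

variable {σ : G → G → κ} {g h k : G}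

theorem mul_inv_right (hσ : IsTotalNormalizedFactorSet σ) (hc : IsCocycleAt σ g h k) :
    IsCocycleAt σ g (h * k) k⁻¹ := by
  unfold IsCocycleAt at hc ⊢
  rw [mul_inv_cancel_right, ← mul_assoc]
  have a1 := hσ.mul_mul_inv (g * h) k
  have a2 := hσ.mul_mul_inv h k
  apply mul_left_cancel₀ (mul_ne_zero (hσ.ne_zero (g * h) k) (hσ.ne_zero h k))
  linear_combination (σ g (h * k) * σ h k) * a1 - (σ g h * σ (g * h) k) * a2 - hc

theorem mul_inv_mid (hσ : IsTotalNormalizedFactorSet σ) (hc : IsCocycleAt σ g h k) :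
    IsCocycleAt σ (g * h) h⁻¹ (h * k) := by
  unfold IsCocycleAt at hc ⊢
  rw [mul_inv_cancel_right, inv_mul_cancel_left]
  have a1 := hσ.mul_mul_inv g h
  have a2 := hσ.mul_inv_mul h k
  apply mul_left_cancel₀ (mul_ne_zero (hσ.ne_zero g h) (hσ.ne_zero h k))
  linear_combination (σ h k * σ g (h * k)) * a1 - (σ g h * σ (g * h) k) * a2 - hc

theorem inv_mul_left (hσ : IsTotalNormalizedFactorSet σ) (hc : IsCocycleAt σ g h k) :
    IsCocycleAt σ g⁻¹ (g * h) k := by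
  unfold IsCocycleAt at hc ⊢
  rw [inv_mul_cancel_left]
  have a1 := hσ.mul_inv_mul g h
  have a2 := hσ.mul_inv_mul g (h * k)
  rw [← mul_assoc] at a2
  apply mul_left_cancel₀ (mul_ne_zero (hσ.ne_zero g h) (hσ.ne_zero g (h * k)))
  linear_combination (σ g (h * k) * σ h k) * a1 - (σ g h * σ (g * h) k) * a2 - hc

end IsCocycleAt

def IsCocycleOnSimplex (σ : G → G → κ) (p : Fin 4 → G) : Prop :=
  IsCocycleAt σ (p 3 * (p 2)⁻¹) (p 2 * (p 1)⁻¹) (p 1 * (p 0)⁻¹)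

namespace IsCocycleOnSimplex

variable {σ : G → G → κ} {p : Fin 4 → G}

theorem comp_swap (hσ : IsTotalNormalizedFactorSet σ) (hp : IsCocycleOnSimplex σ p)
    (i : Fin 3) : IsCocycleOnSimplex σ (p ∘ Equiv.swap i.castSucc i.succ) := by
  unfold IsCocycleOnSimplex at hp ⊢
  fin_cases i <;>
    simp only [Fin.isValue, Fin.reduceFinMk, Fin.reduceCastSucc, Fin.reduceSucc, comp_apply,
      Equiv.swap_apply_left, Equiv.swap_apply_right, Equiv.swap_apply_of_ne_of_ne, ne_eq,
      Fin.reduceEq, not_false_eq_true]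
  · convert hp.mul_inv_right hσ using 1 <;> group
  · convert hp.mul_inv_mid hσ using 1 <;> group
  · convert hp.inv_mul_left hσ using 1 <;> group

theorem comp_perm (hσ : IsTotalNormalizedFactorSet σ) (hp : IsCocycleOnSimplex σ p)
    (π : Equiv.Perm (Fin 4)) : IsCocycleOnSimplex σ (p ∘ π) := by
  have hπ : π ∈ Submonoid.closure (Set.range fun i : Fin 3 => Equiv.swap i.castSucc i.succ) := by
    rw [Equiv.Perm.mclosure_swap_castSucc_succ]; trivial
  induction hπ using Submonoid.closure_induction generalizing p with
  | mem _ hτ => obtain ⟨i, rfl⟩ := hτ; exact hp.comp_swap hσ i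
  | one => exact hp
  | mul π τ _ _ ihπ ihτ => exact ihτ (ihπ hp)

theorem of_not_injective (hσ : IsTotalNormalizedFactorSet σ) (hp : ¬ Injective p) :
    IsCocycleOnSimplex σ p := by
  obtain ⟨i, j, hpij, hij⟩ : ∃ i j, p i = p j ∧ i ≠ j := by
    simpa [Injective] using hp
  set π : Equiv.Perm (Fin 4) := Equiv.swap 0 i * Equiv.swap 1 (Equiv.swap 0 i j) with hπ
  have hπ0 : π 0 = i := by
    have : Equiv.swap 0 i j ≠ 0 := by
      rw [Ne, Equiv.swap_apply_eq_iff, Equiv.swap_apply_left]; exact hij.symm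
    simp [hπ, Equiv.swap_apply_of_ne_of_ne (Fin.zero_ne_one) this.symm]
  have hπ1 : π 1 = j := by simp [hπ]
  have h10 : p (π 1) = p (π 0) := by rw [hπ0, hπ1, hpij]
  have hdeg : IsCocycleOnSimplex σ (p ∘ π) := by
    simp only [IsCocycleOnSimplex, comp_apply, h10, mul_inv_cancel]
    exact hσ.isCocycleAt_one_right _ _
  simpa [comp_assoc] using hdeg.comp_perm hσ π⁻¹

theorem of_forall_mem_range (hσ : IsTotalNormalizedFactorSet σ) (hp : IsCocycleOnSimplex σ p)
    {q : Fin 4 → G} (hq : ∀ i, q i ∈ Set.range p) : IsCocycleOnSimplex σ q := by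
  by_cases hinj : Injective q
  · choose π hπ using hq
    have hπinj : Injective π := fun a b hab => hinj (by rw [← hπ a, ← hπ b, hab])
    convert hp.comp_perm hσ (Equiv.ofBijective π (Finite.injective_iff_bijective.mp hπinj))
    funext i
    exact (hπ i).symm
  · exact of_not_injective hσ hinj

end IsCocycleOnSimplex

def IsCocycleOn (σ : G → G → κ) (S : Set G) : Prop :=
  ∀ g h s, s ∈ S → h * s ∈ S → g * (h * s) ∈ S → IsCocycleAt σ g h s

theorem IsCocycleOnSimplex.isCocycleOn_range {σ : G → G → κ} {p : Fin 4 → G}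
    (hσ : IsTotalNormalizedFactorSet σ) (hp : IsCocycleOnSimplex σ p) (h1 : 1 ∈ Set.range p) :
    IsCocycleOn σ (Set.range p) := by
  intro g h s hs hhs hghs
  have hq := hp.of_forall_mem_range hσ (q := ![1, s, h * s, g * (h * s)]) fun i => by
    fin_cases i <;> assumption
  simpa [IsCocycleOnSimplex, -mul_inv_rev] using hq

section PartialShift

variable (σ : G → G → κ) (S : Set G)

open Classical in
/-- `partialShift σ S 1` is only the projection onto the span of `S`, not the identity, so these
operators satisfy the relations `TPGARel` but not `IsPartialProjRep`. -/
noncomputable def partialShift (g : G) : Module.End κ (G →₀ κ) :=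
  Finsupp.linearCombination κ fun s =>
    if s ∈ S ∧ g * s ∈ S then Finsupp.single (g * s) (σ g s) else 0

open Classical in
theorem partialShift_single (g s : G) (c : κ) :
    partialShift σ S g (Finsupp.single s c) =
      if s ∈ S ∧ g * s ∈ S then Finsupp.single (g * s) (c * σ g s) else 0 := by
  rw [partialShift, Finsupp.linearCombination_single]
  split_ifs <;> simp

variable {σ S}

theorem partialShift_inv_mul_mul (hS : IsCocycleOn σ S) (g h : G) :
    partialShift σ S g⁻¹ * partialShift σ S g * partialShift σ S h =
      σ g h • (partialShift σ S g⁻¹ * partialShift σ S (g * h)) := by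
  refine Finsupp.lhom_ext fun s c => ?_
  simp only [Module.End.mul_apply, LinearMap.smul_apply, partialShift_single]
  by_cases h1 : s ∈ S <;> by_cases h2 : h * s ∈ S <;> by_cases h3 : g * (h * s) ∈ S <;>
    simp only [partialShift_single, h1, h2, h3, and_self, and_true, and_false, ↓reduceIte,
      map_zero, smul_zero, mul_assoc, inv_mul_cancel_left, Finsupp.smul_single, smul_eq_mul]
  have hc : σ g h * σ (g * h) s = σ g (h * s) * σ h s := hS g h s h1 h2 h3
  congr 1
  linear_combination (-(c * σ g⁻¹ (g * (h * s)))) * hc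

theorem partialShift_mul_mul_inv (hS : IsCocycleOn σ S) (g h : G) :
    partialShift σ S g * partialShift σ S h * partialShift σ S h⁻¹ =
      σ g h • (partialShift σ S (g * h) * partialShift σ S h⁻¹) := by
  refine Finsupp.lhom_ext fun s c => ?_
  simp only [Module.End.mul_apply, LinearMap.smul_apply, partialShift_single]
  by_cases h1 : s ∈ S <;> by_cases h2 : h⁻¹ * s ∈ S <;> by_cases h3 : g * s ∈ S <;>
    simp only [partialShift_single, h1, h2, h3, and_self, and_true, and_false, ↓reduceIte,
      map_zero, smul_zero, mul_assoc, mul_inv_cancel_left, Finsupp.smul_single, smul_eq_mul]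
  have hc : σ g h * σ (g * h) (h⁻¹ * s) = σ g s * σ h (h⁻¹ * s) := by
    simpa [IsCocycleAt] using hS g h (h⁻¹ * s) h2 (by simpa using h1) (by simpa using h3)
  congr 1
  linear_combination (-(c * σ h⁻¹ s)) * hc

theorem partialShift_mul_one (hσ : IsTotalNormalizedFactorSet σ) (g : G) :
    partialShift σ S g * partialShift σ S 1 = partialShift σ S g := by
  refine Finsupp.lhom_ext fun s c => ?_
  by_cases hs : s ∈ S <;> simp [partialShift_single, hs, hσ.one_left, -Finsupp.single_mul]

theorem partialShift_one_mul (hσ : IsTotalNormalizedFactorSet σ) (g : G) :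
    partialShift σ S 1 * partialShift σ S g = partialShift σ S g := by
  refine Finsupp.lhom_ext fun s c => ?_
  by_cases hgs : s ∈ S ∧ g * s ∈ S <;>
    simp [partialShift_single, hgs, hσ.one_left, -Finsupp.single_mul]

theorem partialShift_tpgaRel (hσ : IsTotalNormalizedFactorSet σ) (hS : IsCocycleOn σ S) :
    TPGARel σ (partialShift σ S) :=
  ⟨fun g h h0 => absurd h0 (hσ.ne_zero g h), partialShift_inv_mul_mul hS,
    partialShift_mul_mul_inv hS, fun g => ⟨partialShift_mul_one hσ g, partialShift_one_mul hσ g⟩⟩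

theorem partialShift_mul_mul_ne_zero (hσ : IsTotalNormalizedFactorSet σ) {x y z : G}
    (h1 : 1 ∈ S) (hz : z ∈ S) (hyz : y * z ∈ S) (hxyz : x * (y * z) ∈ S) :
    partialShift σ S x * partialShift σ S y * partialShift σ S z ≠ 0 := by
  intro h
  have := congrArg (fun T => T (Finsupp.single 1 1)) h
  simp [partialShift_single, h1, hz, hyz, hxyz, hσ.ne_zero, -Finsupp.single_mul] at this

end PartialShift

end

theorem stmt_15_general {κ G R : Type} [Field κ] [Group G] [Ring R] [Algebra κ R]
    (σ : G → G → κ) (hσ : IsFactorSet σ)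
    (htotal : ∀ g h : G, σ g h ≠ 0) (hnorm : ∀ g : G, σ g g⁻¹ = 1)
    (Γ : G → R) (hrel : TPGARel σ Γ)
    (huniv : ∀ (R' : Type) [Ring R'] [Algebra κ R'] (Γ' : G → R'),
      TPGARel σ Γ' → ∃ f : R →ₐ[κ] R', ∀ g, f (Γ g) = Γ' g)
    (x y z : G) :
    Γ x * Γ y * Γ z = 0 ↔ σ x y * σ (x * y) z ≠ σ x (y * z) * σ y z := by
  have hσ' : IsTotalNormalizedFactorSet σ := ⟨hσ, htotal, hnorm⟩
  refine ⟨fun hzero hcoc => ?_, hrel.mul_mul_eq_zero_of_not_isCocycleAt hnorm⟩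
  let p : Fin 4 → G := ![1, z, y * z, x * (y * z)]
  have hp : IsCocycleOnSimplex σ p := by
    simpa [IsCocycleOnSimplex, IsCocycleAt, p, -mul_inv_rev] using hcoc
  obtain ⟨f, hf⟩ := huniv _ _ (partialShift_tpgaRel hσ' (hp.isCocycleOn_range hσ' ⟨0, rfl⟩))
  refine partialShift_mul_mul_ne_zero (S := Set.range p) (x := x) (y := y) (z := z) hσ'
    ⟨0, rfl⟩ ⟨1, rfl⟩ ⟨2, rfl⟩ ⟨3, rfl⟩ ?_
  rw [← hf, ← hf, ← hf, ← map_mul, ← map_mul, hzero, map_zero]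

/-- In `κ_par^σ G` (presented as the universal algebra generated by the `[g]^σ`'s with
the relations `TPGARel`), for a factor set `σ` with total domain over an algebraically
closed field, `[x]^σ[y]^σ[z]^σ = 0` iff `σ(x,y)σ(xy,z) ≠ σ(x,yz)σ(y,z)`. -/
theorem stmt_15 {κ G R : Type} [Field κ] [IsAlgClosed κ] [Group G] [Ring R] [Algebra κ R]
    (σ : G → G → κ) (hσ : IsFactorSet σ)
    (htotal : ∀ g h : G, σ g h ≠ 0) (hnorm : ∀ g : G, σ g g⁻¹ = 1)
    (Γ : G → R) (hrel : TPGARel σ Γ)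
    (hgen : Algebra.adjoin κ (Set.range Γ) = ⊤)
    (huniv : ∀ (R' : Type) [Ring R'] [Algebra κ R'] (Γ' : G → R'),
      TPGARel σ Γ' → ∃ f : R →ₐ[κ] R', ∀ g, f (Γ g) = Γ' g)
    (x y z : G) :
    Γ x * Γ y * Γ z = 0 ↔ σ x y * σ (x * y) z ≠ σ x (y * z) * σ y z :=
  stmt_15_general σ hσ htotal hnorm Γ hrel huniv x y z
end

section
/- If G is a torsion-free group, then the spectral partial action of G on Ω_σ is topologically free for every factor set σ of G. -/
/-- Old Mathlib `Monoid.IsTorsionFree` (removed upstream), restored with its original meaning. -/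
def Monoid.IsTorsionFree (G : Type*) [Monoid G] : Prop :=
  ∀ g : G, g ≠ 1 → ¬IsOfFinOrder g

/-- The Bernoulli (product) topology on `2^G = Set G`. -/
def bernoulliTop (G : Type) : TopologicalSpace (Set G) :=
  TopologicalSpace.induced (fun (s : Set G) (g : G) => g ∈ s)
    (@Pi.topologicalSpace G (fun _ => Prop) fun _ => ⊥)

/-!
A point of `Ω_σ` fixed by `g` contains `1`, hence the whole orbit `{gⁿ : n ∈ ℤ}`, which is infinite
when `g` has infinite order. On the other hand `Ω_σ` is closed under passing to subsets that still
contain `1`, so any open set around `ξ` also contains the finite truncation `{1} ∪ (ξ ∩ I)`, where `I`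
is the finite set of coordinates the basic neighbourhood constrains. So no nonempty open set consists
of fixed points.
-/

attribute [local instance] bernoulliTop

theorem bernoulliTop.exists_finset_of_mem_isOpen {α : Type} {U : Set (Set α)} (hU : IsOpen U)
    {ξ : Set α} (hξ : ξ ∈ U) :
    ∃ I : Finset α, ∀ η : Set α, (∀ i ∈ I, i ∈ η ↔ i ∈ ξ) → η ∈ U := by
  -- `bernoulliTop` gives `Prop` the discrete topology, not the default Sierpiński one.
  let _ : TopologicalSpace Prop := ⊥
  obtain ⟨W, hW, rfl⟩ := isOpen_induced_iff.mp hU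
  obtain ⟨I, u, hu, hIu⟩ := isOpen_pi_iff.mp hW _ hξ
  refine ⟨I, fun η hη => hIu fun i hi => ?_⟩
  convert (hu i hi).2 using 1
  exact hη i hi

theorem mem_Omega_of_subset {κ G : Type} [Field κ] [Group G] {σ : G → G → κ} {ξ η : Set G}
    (hξ : ξ ∈ Omega σ) (hηξ : η ⊆ ξ) (h1 : (1 : G) ∈ η) : η ∈ Omega σ :=
  ⟨h1, fun V hV hVη => hξ.2 V hV (hVη.trans hηξ)⟩

theorem Omega.exists_finite_mem_of_isOpen {κ G : Type} [Field κ] [Group G] {σ : G → G → κ}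
    {U : Set {ξ : Set G // ξ ∈ Omega σ}} (hU : IsOpen U) (hne : U.Nonempty) :
    ∃ ξ ∈ U, ξ.1.Finite := by
  obtain ⟨ξ, hξ⟩ := hne
  obtain ⟨W, hW, rfl⟩ := isOpen_induced_iff.mp hU
  obtain ⟨I, hI⟩ := bernoulliTop.exists_finset_of_mem_isOpen hW hξ
  have h1ξ : (1 : G) ∈ ξ.1 := ξ.2.1
  set η : Set G := insert 1 (ξ.1 ∩ I)
  have hηξ : η ⊆ ξ.1 := Set.insert_subset h1ξ Set.inter_subset_left
  have hη : ∀ i ∈ I, i ∈ η ↔ i ∈ ξ.1 := fun i hi => ⟨(hηξ ·), fun h => Or.inr ⟨h, hi⟩⟩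
  exact ⟨⟨η, mem_Omega_of_subset ξ.2 hηξ (Set.mem_insert 1 _)⟩, hI η hη,
    ((I.finite_toSet.subset Set.inter_subset_right).insert 1)⟩

open Pointwise in
theorem zpow_mem_of_image_mul_left_eq {G : Type} [Group G] {g : G} {ξ : Set G}
    (h1 : (1 : G) ∈ ξ) (hfix : (fun t => g * t) '' ξ = ξ) (n : ℤ) : g ^ n ∈ ξ := by
  have hstab : g ∈ MulAction.stabilizer G ξ := hfix
  have hn : g ^ n • ξ = ξ := Subgroup.zpow_mem _ hstab n
  simpa only [smul_eq_mul, mul_one, hn] using Set.smul_mem_smul_set (a := g ^ n) h1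

theorem infinite_of_image_mul_left_eq {G : Type} [Group G] {g : G} (hg : ¬IsOfFinOrder g)
    {ξ : Set G} (h1 : (1 : G) ∈ ξ) (hfix : (fun t => g * t) '' ξ = ξ) : ξ.Infinite :=
  Set.infinite_of_injective_forall_mem (injective_zpow_iff_not_isOfFinOrder.mpr hg)
    (zpow_mem_of_image_mul_left_eq h1 hfix)

theorem stmt_16_general {κ G : Type} [Field κ] [Group G]
    (σ : G → G → κ) (hG : Monoid.IsTorsionFree G) :
    letI : TopologicalSpace (Set G) := bernoulliTop G
    ∀ g : G, g ≠ 1 →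
      interior {ξ : {ξ : Set G // ξ ∈ Omega σ} |
        g⁻¹ ∈ ξ.1 ∧ (fun t => g * t) '' ξ.1 = ξ.1} = ∅ := by
  intro g hg
  by_contra hne
  obtain ⟨ξ, hξ, hfin⟩ :=
    Omega.exists_finite_mem_of_isOpen isOpen_interior (Set.nonempty_iff_ne_empty.mpr hne)
  exact infinite_of_image_mul_left_eq (hG g hg) ξ.2.1 (interior_subset hξ).2 hfin

/-- If `G` is torsion-free then the spectral partial action of `G` on `Ω_σ` is
topologically free for every factor set `σ`: for each `g ≠ 1` the fixed-point set of
`θ_g` has empty interior. -/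
theorem stmt_16 {κ G : Type} [Field κ] [Group G]
    (σ : G → G → κ) (hσ : IsFactorSet σ) (hG : Monoid.IsTorsionFree G) :
    letI : TopologicalSpace (Set G) := bernoulliTop G
    ∀ g : G, g ≠ 1 →
      interior {ξ : {ξ : Set G // ξ ∈ Omega σ} |
        g⁻¹ ∈ ξ.1 ∧ (fun t => g * t) '' ξ.1 = ξ.1} = ∅ :=
  stmt_16_general σ hG
end

section
/- An element ξ ∈ Ω_σ is an isolated point of Ω_σ (in the topology induced from 2^G) if and only if both ξ and A_σ(ξ) := { g ∈ G∖ξ : ξ ∪ {g} ∈ Ω_σ } are finite sets; in that case the singleton {ξ} equals the basic open set (ξ, A_σ(ξ))^σ = { η ∈ Ω_σ : ξ ⊆ η and η ∩ A_σ(ξ) = ∅ }. -/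
/-- The set `A_σ(ξ)` of admissible elements for `ξ`. -/
def Adm {κ G : Type} [Field κ] [Group G] (σ : G → G → κ) (ξ : Set G) : Set G :=
  {g | g ∉ ξ ∧ ξ ∪ {g} ∈ Omega σ}

/-!
A neighbourhood of `ξ` in `2^G` constrains only a finite set `I` of coordinates. If `{ξ}` is open
in `Ω_σ`, every `η ∈ Ω_σ` agreeing with `ξ` on `I` equals `ξ`; since `Ω_σ` is downward closed this
applies to `(I ∩ ξ) ∪ {1}` and, for `g ∈ A_σ(ξ) \ I`, to `ξ ∪ {g}`, giving `ξ ⊆ I ∪ {1}` and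
`A_σ(ξ) ⊆ I`. Conversely, if `η ∈ Ω_σ` contains `ξ` and some `g ∉ ξ`, then `ξ ∪ {g} ⊆ η` puts `g`
in `A_σ(ξ)`; so `(ξ, A_σ(ξ))^σ = {ξ}`, which is open when `ξ` and `A_σ(ξ)` are finite.
-/

open Set

attribute [local instance] bernoulliTop

section Bernoulli

variable {G : Type}

theorem isOpen_setOf_mem_eq (g : G) (p : Prop) :
    IsOpen {η : Set G | (g ∈ η) = p} :=
  let _ : TopologicalSpace Prop := ⊥
  isOpen_induced_iff.mpr
    ⟨_, (continuous_apply (A := fun _ : G => Prop) g).isOpen_preimage {p} trivial, rfl⟩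

theorem isOpen_setOf_subset_inter_eq_empty {α β : Set G} (hα : α.Finite) (hβ : β.Finite) :
    IsOpen {η : Set G | α ⊆ η ∧ η ∩ β = ∅} := by
  have hbasic : {η : Set G | α ⊆ η ∧ η ∩ β = ∅}
      = (⋂ g ∈ α, {η | (g ∈ η) = True}) ∩ ⋂ g ∈ β, {η | (g ∈ η) = False} := by
    ext η
    simp [subset_def, eq_empty_iff_forall_notMem, imp_not_comm]
  rw [hbasic]
  exact (hα.isOpen_biInter fun g _ => isOpen_setOf_mem_eq g True).inter
    (hβ.isOpen_biInter fun g _ => isOpen_setOf_mem_eq g False)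

theorem exists_finset_of_isOpen {U : Set (Set G)} (hU : IsOpen U) {ξ : Set G}
    (hξ : ξ ∈ U) : ∃ I : Finset G, ∀ η : Set G, (∀ i ∈ I, i ∈ η ↔ i ∈ ξ) → η ∈ U := by
  let _ : TopologicalSpace Prop := ⊥
  obtain ⟨t, ht, rfl⟩ := isOpen_induced_iff.mp hU
  obtain ⟨I, u, hu, hIu⟩ := isOpen_pi_iff.mp ht _ hξ
  refine ⟨I, fun η hagree => hIu fun i hi => ?_⟩
  change (i ∈ η) ∈ u i
  rw [propext (hagree i hi)]
  exact (hu i hi).2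

end Bernoulli

variable {κ G : Type} [Field κ] [Group G] {σ : G → G → κ}

theorem mem_omega_of_subset_s17 {ξ η : Set G} (hξ : ξ ∈ Omega σ) (h1 : (1 : G) ∈ η) (hηξ : η ⊆ ξ) :
    η ∈ Omega σ :=
  ⟨h1, fun V hV hVη => hξ.2 V hV (hVη.trans hηξ)⟩

theorem eq_of_subset_of_inter_adm_eq_empty {ξ η : Set G} (h1 : (1 : G) ∈ ξ) (hη : η ∈ Omega σ)
    (hξη : ξ ⊆ η) (hdisj : η ∩ Adm σ ξ = ∅) : η = ξ := by
  refine Subset.antisymm (fun g hgη => ?_) hξη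
  by_contra hgξ
  have hadm : g ∈ Adm σ ξ :=
    ⟨hgξ, mem_omega_of_subset_s17 hη (Or.inl h1) (union_subset hξη (singleton_subset_iff.mpr hgη))⟩
  exact (eq_empty_iff_forall_notMem.mp hdisj) g ⟨hgη, hadm⟩

theorem inter_adm_self_eq_empty (ξ : Set G) : ξ ∩ Adm σ ξ = ∅ :=
  eq_empty_iff_forall_notMem.mpr fun _ ⟨hg, hgA⟩ => hgA.1 hg

theorem setOf_val_eq_eq_setOf_subset_inter_adm_eq_empty {ξ : Set G} (h1 : (1 : G) ∈ ξ) :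
    {x : {η : Set G // η ∈ Omega σ} | x.1 = ξ}
      = {x : {η : Set G // η ∈ Omega σ} | ξ ⊆ x.1 ∧ x.1 ∩ Adm σ ξ = ∅} := by
  ext ⟨η, hη⟩
  constructor
  · rintro (rfl : η = ξ)
    exact ⟨subset_rfl, inter_adm_self_eq_empty η⟩
  · rintro ⟨hξη, hdisj⟩
    exact eq_of_subset_of_inter_adm_eq_empty h1 hη hξη hdisj

theorem exists_finset_of_isOpen_setOf_val_eq {ξ : Set G} (hξ : ξ ∈ Omega σ)
    (hopen : IsOpen {x : {η : Set G // η ∈ Omega σ} | x.1 = ξ}) :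
    ∃ I : Finset G, ∀ η ∈ Omega σ, (∀ i ∈ I, i ∈ η ↔ i ∈ ξ) → η = ξ := by
  obtain ⟨U, hU, hpre⟩ := isOpen_induced_iff.mp hopen
  have hξU : ξ ∈ U := by
    change (⟨ξ, hξ⟩ : {η : Set G // η ∈ Omega σ}) ∈ Subtype.val ⁻¹' U
    rw [hpre]
    rfl
  obtain ⟨I, hI⟩ := exists_finset_of_isOpen hU hξU
  refine ⟨I, fun η hη hagree => ?_⟩
  have : (⟨η, hη⟩ : {η : Set G // η ∈ Omega σ}) ∈ Subtype.val ⁻¹' U := hI η hagree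
  rwa [hpre] at this

theorem subset_union_one_of_forall_agree_eq {ξ : Set G} {I : Finset G} (hξ : ξ ∈ Omega σ)
    (hI : ∀ η ∈ Omega σ, (∀ i ∈ I, i ∈ η ↔ i ∈ ξ) → η = ξ) : ξ ⊆ ↑I ∪ {1} := by
  have hsmall : (↑I ∩ ξ) ∪ {1} ∈ Omega σ :=
    mem_omega_of_subset_s17 hξ (Or.inr rfl)
      (union_subset inter_subset_right (singleton_subset_iff.mpr hξ.1))
  have heq := hI _ hsmall fun i hi => by
    simp only [mem_union, mem_inter_iff, Finset.mem_coe, mem_singleton_iff]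
    exact ⟨fun h => h.elim And.right fun h1 => h1 ▸ hξ.1, fun h => Or.inl ⟨hi, h⟩⟩
  rw [← heq]
  exact union_subset_union_left _ inter_subset_left

theorem adm_subset_of_forall_agree_eq {ξ : Set G} {I : Finset G}
    (hI : ∀ η ∈ Omega σ, (∀ i ∈ I, i ∈ η ↔ i ∈ ξ) → η = ξ) : Adm σ ξ ⊆ I := by
  intro g ⟨hgξ, hgΩ⟩
  by_contra hgI
  have heq := hI _ hgΩ fun i hi => by
    simp only [mem_union, mem_singleton_iff]
    exact ⟨fun h => h.elim id fun hig => absurd (hig ▸ hi) hgI, Or.inl⟩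
  exact hgξ (heq ▸ Or.inr rfl)

theorem stmt_17_general {κ G : Type} [Field κ] [Group G]
    (σ : G → G → κ) (ξ : Set G) (hξ : ξ ∈ Omega σ) :
    letI : TopologicalSpace (Set G) := bernoulliTop G
    (IsOpen {x : {η : Set G // η ∈ Omega σ} | x.1 = ξ} ↔ ξ.Finite ∧ (Adm σ ξ).Finite) ∧
    (ξ.Finite → (Adm σ ξ).Finite →
      {x : {η : Set G // η ∈ Omega σ} | x.1 = ξ}
        = {x : {η : Set G // η ∈ Omega σ} | ξ ⊆ x.1 ∧ x.1 ∩ Adm σ ξ = ∅}) := by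
  have hbasic := setOf_val_eq_eq_setOf_subset_inter_adm_eq_empty (σ := σ) hξ.1
  refine ⟨⟨fun hopen => ?_, fun ⟨hfin, hAfin⟩ => ?_⟩, fun _ _ => hbasic⟩
  · obtain ⟨I, hI⟩ := exists_finset_of_isOpen_setOf_val_eq hξ hopen
    exact ⟨(I.finite_toSet.union (finite_singleton 1)).subset
        (subset_union_one_of_forall_agree_eq hξ hI),
      I.finite_toSet.subset (adm_subset_of_forall_agree_eq hI)⟩
  · rw [hbasic]
    exact isOpen_induced_iff.mpr ⟨_, isOpen_setOf_subset_inter_eq_empty hfin hAfin, rfl⟩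

/-- `ξ ∈ Ω_σ` is an isolated point of `Ω_σ` iff both `ξ` and `A_σ(ξ)` are finite; in
that case `{ξ}` is the basic open set `(ξ, A_σ(ξ))^σ`. -/
theorem stmt_17 {κ G : Type} [Field κ] [Group G] [Infinite G]
    (σ : G → G → κ) (hσ : IsFactorSet σ) (ξ : Set G) (hξ : ξ ∈ Omega σ) :
    letI : TopologicalSpace (Set G) := bernoulliTop G
    (IsOpen {x : {η : Set G // η ∈ Omega σ} | x.1 = ξ} ↔ ξ.Finite ∧ (Adm σ ξ).Finite) ∧
    (ξ.Finite → (Adm σ ξ).Finite →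
      {x : {η : Set G // η ∈ Omega σ} | x.1 = ξ}
        = {x : {η : Set G // η ∈ Omega σ} | ξ ⊆ x.1 ∧ x.1 ∩ Adm σ ξ = ∅}) :=
  stmt_17_general σ ξ hξ
end

section
/- For a factor set σ of a group G and g ∈ G, the fixed-point set Fix^σ_g = { ξ ∈ Ω_σ : g ∈ ξ and gξ = ξ } is nonempty if and only if the restriction of σ to ⟨g⟩ × ⟨g⟩ is a global 2-cocycle (i.e. σ(g^s, g^t) ≠ 0 for all s,t ∈ ℤ and σ(g^s, g^{t+m})σ(g^t, g^m) = σ(g^s, g^t)σ(g^{s+t}, g^m) for all s,t,m ∈ ℤ). -/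
open Subgroup
open scoped Pointwise

section Omega

variable {κ G : Type} [Field κ] [Group G] {σ : G → G → κ}

lemma zpowers_subset_of_smul_eq {ξ : Set G} {g : G} (h1 : (1 : G) ∈ ξ) (hg : g • ξ = ξ) :
    (zpowers g : Set G) ⊆ ξ := by
  intro x hx
  have hx_stab : x • ξ = ξ :=
    MulAction.mem_stabilizer_iff.1 (zpowers_le.2 (MulAction.mem_stabilizer_iff.2 hg) hx)
  rw [← hx_stab]
  simpa using Set.smul_mem_smul_set (a := x) h1

lemma ne_zero_of_subgroup_subset_omega {ξ : Set G} (hξ : ξ ∈ Omega σ) {H : Subgroup G}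
    (hH : (H : Set G) ⊆ ξ) {a b : G} (ha : a ∈ H) (hb : b ∈ H) : σ a b ≠ 0 := fun h0 =>
  hξ.2 {1, 1 * a, 1 * a * b} (Or.inl ⟨1, a, b, h0, rfl⟩) <| by
    simp only [Set.insert_subset_iff, Set.singleton_subset_iff, one_mul]
    exact ⟨hH H.one_mem, hH ha, hH (H.mul_mem ha hb)⟩

lemma cocycle_of_subgroup_subset_omega {ξ : Set G} (hξ : ξ ∈ Omega σ) {H : Subgroup G}
    (hH : (H : Set G) ⊆ ξ) {a b c : G} (ha : a ∈ H) (hb : b ∈ H) (hc : c ∈ H) :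
    σ a (b * c) * σ b c = σ a b * σ (a * b) c := by
  by_contra hne
  refine hξ.2 {1, 1 * a, 1 * a * b, 1 * a * b * c} (Or.inr ⟨1, a, b, c, hne, rfl⟩) ?_
  simp only [Set.insert_subset_iff, Set.singleton_subset_iff, one_mul]
  exact ⟨hH H.one_mem, hH ha, hH (H.mul_mem ha hb), hH (H.mul_mem (H.mul_mem ha hb) hc)⟩

lemma coe_subgroup_mem_omega {H : Subgroup G} (hne : ∀ a ∈ H, ∀ b ∈ H, σ a b ≠ 0)
    (hcoc : ∀ a ∈ H, ∀ b ∈ H, ∀ c ∈ H, σ a (b * c) * σ b c = σ a b * σ (a * b) c) :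
    (H : Set G) ∈ Omega σ := by
  refine ⟨H.one_mem, ?_⟩
  rintro V (⟨h, a, b, h0, rfl⟩ | ⟨h, a, b, c, hne', rfl⟩) hV <;>
    simp only [Set.insert_subset_iff, Set.singleton_subset_iff, SetLike.mem_coe] at hV
  · obtain ⟨hh, hha, hhab⟩ := hV
    have ha := (H.mul_mem_cancel_left hh).1 hha
    exact hne a ha b ((H.mul_mem_cancel_left hha).1 hhab) h0
  · obtain ⟨hh, hha, hhab, hhabc⟩ := hV
    have ha := (H.mul_mem_cancel_left hh).1 hha
    have hb := (H.mul_mem_cancel_left hha).1 hhab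
    exact hne' (hcoc a ha b hb c ((H.mul_mem_cancel_left hhab).1 hhabc))

end Omega

theorem stmt_18_general {κ G : Type} [Field κ] [Group G]
    (σ : G → G → κ) (g : G) :
    (∃ ξ : Set G, ξ ∈ Omega σ ∧ g ∈ ξ ∧ (fun t => g * t) '' ξ = ξ) ↔
      ((∀ s t : ℤ, σ (g ^ s) (g ^ t) ≠ 0) ∧
       (∀ s t m : ℤ, σ (g ^ s) (g ^ (t + m)) * σ (g ^ t) (g ^ m)
          = σ (g ^ s) (g ^ t) * σ (g ^ (s + t)) (g ^ m))) := by
  constructor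
  · rintro ⟨ξ, hξ, -, hfix⟩
    have hsub := zpowers_subset_of_smul_eq hξ.1 hfix
    refine ⟨fun s t => ne_zero_of_subgroup_subset_omega hξ hsub
      (zpow_mem_zpowers g s) (zpow_mem_zpowers g t), fun s t m => ?_⟩
    rw [zpow_add, zpow_add]
    exact cocycle_of_subgroup_subset_omega hξ hsub
      (zpow_mem_zpowers g s) (zpow_mem_zpowers g t) (zpow_mem_zpowers g m)
  · rintro ⟨hnz, hcoc⟩
    refine ⟨zpowers g, coe_subgroup_mem_omega ?_ ?_, mem_zpowers g,
      smul_coe_set (mem_zpowers g)⟩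
    · simpa only [forall_mem_zpowers] using hnz
    · simpa only [forall_mem_zpowers, ← zpow_add] using hcoc

/-- `Fix^σ_g ≠ ∅` iff the restriction of `σ` to `⟨g⟩ × ⟨g⟩` is a global 2-cocycle. -/
theorem stmt_18 {κ G : Type} [Field κ] [Group G]
    (σ : G → G → κ) (hσ : IsFactorSet σ) (g : G) :
    (∃ ξ : Set G, ξ ∈ Omega σ ∧ g ∈ ξ ∧ (fun t => g * t) '' ξ = ξ) ↔
      ((∀ s t : ℤ, σ (g ^ s) (g ^ t) ≠ 0) ∧
       (∀ s t m : ℤ, σ (g ^ s) (g ^ (t + m)) * σ (g ^ t) (g ^ m)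
          = σ (g ^ s) (g ^ t) * σ (g ^ (s + t)) (g ^ m))) :=
  stmt_18_general σ g
end
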